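/- arXiv:1811.09207 — 7 statements merged into one kernel-verified Lean document; each statement's English description precedes it below -/
import Mathlib

section
/- Let p(x) = x^{2n+1} - m_{2n}x^{2n} + m_{2n-1}x^{2n-1} + ⋯ + m_1 x - 1 be a polynomial with integer coefficients m_j and n ≥ 2, with complex roots x_0, x_1, …, x_{2n}. If x_0 is a simple real root and |x_1| = |x_2| = ⋯ = |x_{2n}|, then x_0 = 1 and |x_j| = 1 for all j = 1, …, 2n. -/
open Polynomial

set_option maxHeartbeats 1600000 in
/-- Lemma on integer polynomials: if `p(x) = x^{2n+1} - m_{2n} x^{2n} + ⋯ + m_1 x - 1`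
(monic, degree `2n+1`, constant term `-1`, `n ≥ 2`) has complex roots
`x_0, …, x_{2n}` with `x_0` a simple real root and all other roots of a common
absolute value, then `x_0 = 1` and all other roots have absolute value `1`. -/
theorem integer_polynomial_roots (n : ℕ) (hn : 2 ≤ n) (p : Polynomial ℤ)
    (hmonic : p.Monic) (hdeg : p.natDegree = 2 * n + 1)
    (hconst : p.coeff 0 = -1)
    (x : Fin (2 * n + 1) → ℂ)
    (hroots : p.map (Int.castRingHom ℂ) = ∏ i, (X - C (x i)))
    (hreal : (x 0).im = 0)
    (hsimple : ∀ i, i ≠ 0 → x i ≠ x 0)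
    (habs : ∀ i j, i ≠ 0 → j ≠ 0 → ‖x i‖ = ‖x j‖) :
    x 0 = 1 ∧ ∀ i, i ≠ 0 → ‖x i‖ = 1 := by
  classical
  have hv1 : ((1 : Fin (2*n+1)) : ℕ) = 1 := by
    rw [Fin.val_one', Nat.mod_eq_of_lt (by omega)]
  have hone : (1 : Fin (2*n+1)) ≠ 0 := by
    intro h; rw [h] at hv1; simp at hv1
  set P : ℂ[X] := p.map (Int.castRingHom ℂ) with hPdef
  -- The product of all the roots is 1.
  have hprod : ∏ i, x i = 1 := by
    have h2 : P.eval 0 = ((p.eval 0 : ℤ) : ℂ) := by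
      rw [hPdef, eval_map]
      have h3 := Polynomial.eval₂_hom (Int.castRingHom ℂ) (0 : ℤ) (p := p)
      simpa using h3
    have h1 : P.eval 0 = ∏ i, (0 - x i) := by
      rw [hroots, eval_prod]; simp
    have h4 : p.eval 0 = -1 := by
      rw [← Polynomial.coeff_zero_eq_eval_zero, hconst]
    rw [h2, h4] at h1
    have h5 : ∏ i, (0 - x i) = (-1 : ℂ) ^ (2*n+1) * ∏ i, x i := by
      calc ∏ i, (0 - x i) = ∏ i, (-1 * x i) := Finset.prod_congr rfl fun i _ => by ring
        _ = (∏ _i : Fin (2*n+1), (-1 : ℂ)) * ∏ i, x i := Finset.prod_mul_distrib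
        _ = (-1 : ℂ) ^ (2*n+1) * ∏ i, x i := by
            rw [Finset.prod_const, Finset.card_univ, Fintype.card_fin]
    rw [h5, Odd.neg_one_pow ⟨n, by ring⟩] at h1
    have : (-1 : ℂ) * 1 = -1 * ∏ i, x i := by rw [mul_one]; exact_mod_cast h1
    exact (mul_left_cancel₀ (by norm_num) this).symm
  have hxne : ∀ i, x i ≠ 0 := fun i hx => by
    have h0 : ∏ i, x i = 0 := Finset.prod_eq_zero (Finset.mem_univ i) hx
    rw [hprod] at h0; exact one_ne_zero h0
  -- every root is an algebraic integer
  have hint : ∀ z : ℂ, (∃ i, x i = z) → IsIntegral ℤ z := by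
    rintro z ⟨i, rfl⟩
    refine ⟨p, hmonic, ?_⟩
    have halg : algebraMap ℤ ℂ = Int.castRingHom ℂ := Subsingleton.elim _ _
    rw [eval₂_eq_eval_map, halg, ← hPdef, hroots, eval_prod]
    exact Finset.prod_eq_zero (Finset.mem_univ i) (by simp)
  -- tool: equal products of linear factors give equal multisets of roots
  have htool : ∀ y : Fin (2*n+1) → ℂ,
      (∏ i, (X - C (y i))) = (∏ i, (X - C (x i))) →
      Multiset.map y Finset.univ.val = Multiset.map x Finset.univ.val := by
    intro y h
    have h1 : ((Finset.univ.val.map y).map fun a => X - C a).prod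
        = ((Finset.univ.val.map x).map fun a => X - C a).prod := by
      rw [Multiset.map_map, Multiset.map_map]
      simpa [Finset.prod_eq_multiset_prod, Function.comp] using h
    have h2 := congrArg Polynomial.roots h1
    rwa [roots_multiset_prod_X_sub_C, roots_multiset_prod_X_sub_C] at h2
  -- conjugates of roots are roots
  have hstarP : ∏ i, (X - C ((starRingEnd ℂ) (x i))) = ∏ i, (X - C (x i)) := by
    have h1 : P.map (starRingEnd ℂ) = P := by
      rw [hPdef, Polynomial.map_map]
      congr 1
      exact Subsingleton.elim _ _
    calc ∏ i, (X - C ((starRingEnd ℂ) (x i)))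
        = (∏ i, (X - C (x i))).map (starRingEnd ℂ) := by
          rw [Polynomial.map_prod]
          refine Finset.prod_congr rfl fun i _ => by
            simp [Polynomial.map_sub]
      _ = P.map (starRingEnd ℂ) := by rw [hroots]
      _ = P := h1
      _ = ∏ i, (X - C (x i)) := hroots
  have hstarms : Multiset.map (fun i => (starRingEnd ℂ) (x i)) Finset.univ.val
      = Multiset.map x Finset.univ.val := htool _ hstarP
  have hstar : ∀ i, ∃ k, x k = (starRingEnd ℂ) (x i) := by
    intro i
    have hm : (starRingEnd ℂ) (x i) ∈ Multiset.map x Finset.univ.val := by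
      rw [← hstarms]
      exact Multiset.mem_map.mpr ⟨i, by simp, rfl⟩
    obtain ⟨k, _, hk⟩ := Multiset.mem_map.mp hm
    exact ⟨k, hk⟩
  -- counting tool
  have hcard_count : ∀ (w : ℂ) (f : Fin (2*n+1) → ℂ),
      (Finset.univ.filter fun i => f i = w).card
        = Multiset.count w (Multiset.map f Finset.univ.val) := by
    intro w f
    rw [Multiset.count_map, Finset.card, Finset.filter_val]
    congr 1
    exact Multiset.filter_congr fun a _ => eq_comm
  have hfilterx0 : (Finset.univ.filter fun i => x i = x 0) = {0} := by
    ext i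
    simp only [Finset.mem_filter, Finset.mem_univ, true_and, Finset.mem_singleton]
    constructor
    · intro h; by_contra hne; exact hsimple i hne h
    · rintro rfl; rfl
  set r : ℝ := ‖x 1‖ with hrdef
  have hr2 : ∀ j, j ≠ 0 → x j * (starRingEnd ℂ) (x j) = ((r : ℂ))^2 := by
    intro j hj
    rw [Complex.mul_conj, ← Complex.sq_norm, habs j 1 hj hone]
    push_cast
    ring
  -- the number field generated by the roots and their conjugates
  set S : Set ℂ := Set.range x ∪ (fun z => (starRingEnd ℂ) z) '' Set.range x with hSdef
  have hSfin : S.Finite := (Set.finite_range x).union ((Set.finite_range x).image _)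
  set F : IntermediateField ℚ ℂ := IntermediateField.adjoin ℚ S with hFdef
  have hxF : ∀ i, x i ∈ F := fun i => IntermediateField.subset_adjoin ℚ S (Or.inl ⟨i, rfl⟩)
  have hsF : ∀ i, (starRingEnd ℂ) (x i) ∈ F := fun i =>
    IntermediateField.subset_adjoin ℚ S (Or.inr ⟨x i, ⟨i, rfl⟩, rfl⟩)
  haveI hSfin' : Finite S := hSfin
  haveI hfin : FiniteDimensional ℚ F := by
    apply IntermediateField.finiteDimensional_adjoin
    rintro z hz
    rcases hz with ⟨i, rfl⟩ | ⟨w, ⟨i, rfl⟩, rfl⟩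
    · exact (hint _ ⟨i, rfl⟩).tower_top
    · show IsIntegral ℚ ((starRingEnd ℂ) (x i))
      obtain ⟨k, hk⟩ := hstar i
      rw [← hk]
      exact (hint _ ⟨k, rfl⟩).tower_top
  set xF : Fin (2*n+1) → F := fun i => ⟨x i, hxF i⟩ with hxFdef
  have pF : p.map (Int.castRingHom F) = ∏ i, (X - C (xF i)) := by
    apply Polynomial.map_injective (algebraMap F ℂ) (algebraMap F ℂ).injective
    rw [Polynomial.map_map, Polynomial.map_prod]
    have h1 : (algebraMap F ℂ).comp (Int.castRingHom F) = Int.castRingHom ℂ :=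
      Subsingleton.elim _ _
    rw [h1, ← hPdef, hroots]
    refine Finset.prod_congr rfl fun i _ => ?_
    simp [Polynomial.map_sub]; rfl
  have hαmem : x 1 * (starRingEnd ℂ) (x 1) ∈ F := mul_mem (hxF 1) (hsF 1)
  set α : F := ⟨x 1 * (starRingEnd ℂ) (x 1), hαmem⟩ with hαdef
  have hαval : (algebraMap F ℂ) α = ((r : ℂ))^2 := hr2 1 hone
  have hαne : α ≠ 0 := by
    intro h
    have h1 : (algebraMap F ℂ) α = 0 := by rw [h, map_zero]
    rw [hαval] at h1
    have : (r : ℂ) = 0 := by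
      have := pow_eq_zero_iff (n := 2) (by norm_num) |>.mp h1
      exact this
    rw [hrdef] at this
    exact hxne 1 (by exact_mod_cast norm_eq_zero.mp (by exact_mod_cast this))
  -- key: all embeddings send α to something of absolute value r ^ 2
  have hkey : ∀ φ : F →ₐ[ℚ] ℂ, ‖φ α‖ = r^2 := by
    intro φ
    set y : Fin (2*n+1) → ℂ := fun i => φ (xF i) with hydef
    have hyprod : ∏ i, (X - C (y i)) = ∏ i, (X - C (x i)) := by
      have h2 : (p.map (Int.castRingHom F)).map (φ : F →+* ℂ) = P := by
        rw [Polynomial.map_map, hPdef]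
        congr 1
        exact Subsingleton.elim _ _
      calc ∏ i, (X - C (y i)) = (∏ i, (X - C (xF i))).map (φ : F →+* ℂ) := by
            rw [Polynomial.map_prod]
            exact (Finset.prod_congr rfl fun i _ => by simp [Polynomial.map_sub]; rfl).symm
        _ = P := by rw [← pF, h2]
        _ = ∏ i, (X - C (x i)) := hroots
    have hyms := htool y hyprod
    have hycard : (Finset.univ.filter fun i => y i = x 0).card = 1 := by
      rw [hcard_count (x 0) y, hyms, ← hcard_count (x 0) x, hfilterx0]
      simp
    obtain ⟨i₀, hi₀⟩ := Finset.card_eq_one.mp hycard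
    have hyi₀ : y i₀ = x 0 := by
      have h1 : i₀ ∈ Finset.univ.filter fun i => y i = x 0 := by
        rw [hi₀]; exact Finset.mem_singleton_self _
      exact (Finset.mem_filter.mp h1).2
    have hyeq : ∀ i, y i = x 0 → i = i₀ := fun i hi => by
      have h1 : i ∈ ({i₀} : Finset _) :=
        hi₀ ▸ Finset.mem_filter.mpr ⟨Finset.mem_univ _, hi⟩
      exact Finset.mem_singleton.mp h1
    have hxi₀ : (Finset.univ.filter fun i => x i = x i₀) = {i₀} := by
      ext i
      simp only [Finset.mem_filter, Finset.mem_univ, true_and, Finset.mem_singleton]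
      constructor
      · intro h
        apply hyeq
        have h2 : xF i = xF i₀ := Subtype.ext h
        show φ (xF i) = x 0
        rw [h2]
        exact hyi₀
      · rintro rfl; rfl
    have hstarcard : (Finset.univ.filter fun i => x i = (starRingEnd ℂ) (x i₀)).card = 1 := by
      have h1 : (Finset.univ.filter fun i => (starRingEnd ℂ) (x i) = (starRingEnd ℂ) (x i₀))
          = (Finset.univ.filter fun i => x i = x i₀) := by
        refine Finset.filter_congr fun i _ => ?_
        constructor
        · intro h; exact (starRingEnd ℂ).injective h
        · intro h; rw [h]
      calc (Finset.univ.filter fun i => x i = (starRingEnd ℂ) (x i₀)).card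
          = Multiset.count ((starRingEnd ℂ) (x i₀)) (Multiset.map x Finset.univ.val) :=
            hcard_count _ x
        _ = Multiset.count ((starRingEnd ℂ) (x i₀))
              (Multiset.map (fun i => (starRingEnd ℂ) (x i)) Finset.univ.val) := by
            rw [hstarms]
        _ = (Finset.univ.filter fun i => (starRingEnd ℂ) (x i) = (starRingEnd ℂ) (x i₀)).card :=
            (hcard_count _ _).symm
        _ = (Finset.univ.filter fun i => x i = x i₀).card := by rw [h1]
        _ = 1 := by rw [hxi₀]; simp
    obtain ⟨j, hj0, hji₀, hjstar⟩ :
        ∃ j : Fin (2*n+1), j ≠ 0 ∧ j ≠ i₀ ∧ x j ≠ (starRingEnd ℂ) (x i₀) := by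
      by_contra hcon
      push_neg at hcon
      have hsub : (Finset.univ : Finset (Fin (2*n+1))) ⊆
          {0, i₀} ∪ (Finset.univ.filter fun i => x i = (starRingEnd ℂ) (x i₀)) := by
        intro j _
        rcases eq_or_ne j 0 with rfl | h0
        · simp
        rcases eq_or_ne j i₀ with rfl | h1
        · simp
        have h2 := hcon j h0 h1
        simp [Finset.mem_union, Finset.mem_filter, h2]
      have hc1 := Finset.card_le_card hsub
      have hc2 : ({0, i₀} ∪ (Finset.univ.filter fun i => x i = (starRingEnd ℂ) (x i₀))).card ≤ 3 := by
        refine le_trans (Finset.card_union_le _ _) ?_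
        have h3 : ({0, i₀} : Finset (Fin (2*n+1))).card ≤ 2 :=
          (Finset.card_insert_le _ _).trans (by simp)
        omega
      rw [Finset.card_univ, Fintype.card_fin] at hc1
      omega
    obtain ⟨k, hk⟩ := hstar j
    have hyj : y j ≠ x 0 := fun h => hji₀ (hyeq j h)
    have hyk : y k ≠ x 0 := by
      intro h
      have hki : k = i₀ := hyeq k h
      apply hjstar
      have h2 : x i₀ = (starRingEnd ℂ) (x j) := hki ▸ hk
      calc x j = (starRingEnd ℂ) ((starRingEnd ℂ) (x j)) := (Complex.conj_conj _).symm
        _ = (starRingEnd ℂ) (x i₀) := by rw [← h2]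
    have hφα : φ α = y j * y k := by
      have hα2 : α = xF j * xF k := by
        apply Subtype.ext
        show x 1 * (starRingEnd ℂ) (x 1) = x j * x k
        rw [hk, hr2 1 hone, hr2 j hj0]
      rw [hα2, map_mul]
    have habs_y : ∀ m : Fin (2*n+1), y m ≠ x 0 → ‖y m‖ = r := by
      intro m hm
      have h1 : y m ∈ Multiset.map x Finset.univ.val := by
        rw [← hyms]; exact Multiset.mem_map.mpr ⟨m, by simp, rfl⟩
      obtain ⟨l, _, hl⟩ := Multiset.mem_map.mp h1
      have hl0 : l ≠ 0 := by
        rintro rfl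
        exact hm hl.symm
      rw [← hl]
      exact habs l 1 hl0 hone
    rw [hφα, norm_mul, habs_y j hyj, habs_y k hyk]
    ring
  -- the norm of α is a rational integer of absolute value r ^ (2 d), and it is ± 1
  have hd : 0 < Fintype.card (F →ₐ[ℚ] ℂ) := Fintype.card_pos_iff.mpr ⟨F.val⟩
  have habsnorm : ‖(algebraMap ℚ ℂ) (Algebra.norm ℚ α)‖
      = r ^ (2 * Fintype.card (F →ₐ[ℚ] ℂ)) := by
    rw [Algebra.norm_eq_prod_embeddings, norm_prod]
    rw [Finset.prod_congr rfl fun φ _ => hkey φ, Finset.prod_const, Finset.card_univ, ← pow_mul]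
  have hintα : IsIntegral ℤ α := by
    have h1 : IsIntegral ℤ (x 1 * (starRingEnd ℂ) (x 1)) := by
      apply IsIntegral.mul (hint _ ⟨1, rfl⟩)
      obtain ⟨k, hk⟩ := hstar 1
      rw [← hk]; exact hint _ ⟨k, rfl⟩
    exact (isIntegral_algebraMap_iff (algebraMap F ℂ).injective).mp h1
  have hprodinv : ∀ m : Fin (2*n+1), (x m)⁻¹ = ∏ i ∈ Finset.univ.erase m, x i := by
    intro m
    have h1 : x m * ∏ i ∈ Finset.univ.erase m, x i = 1 := by
      rw [Finset.mul_prod_erase _ _ (Finset.mem_univ m)]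
      exact hprod
    exact inv_eq_of_mul_eq_one_right h1
  have hintinv : IsIntegral ℤ (α⁻¹ : F) := by
    have h1 : IsIntegral ℤ (((algebraMap F ℂ) α)⁻¹) := by
      rw [hαval, ← hr2 1 hone, mul_inv]
      apply IsIntegral.mul
      · rw [hprodinv 1]
        exact IsIntegral.prod _ fun i _ => hint _ ⟨i, rfl⟩
      · rw [← map_inv₀ (starRingEnd ℂ), hprodinv 1, map_prod]
        refine IsIntegral.prod _ fun i _ => ?_
        obtain ⟨k, hk⟩ := hstar i
        rw [← hk]; exact hint _ ⟨k, rfl⟩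
    rw [← map_inv₀ (algebraMap F ℂ)] at h1
    exact (isIntegral_algebraMap_iff (algebraMap F ℂ).injective).mp h1
  obtain ⟨a, ha⟩ := IsIntegrallyClosed.isIntegral_iff.mp (Algebra.isIntegral_norm ℚ hintα)
  obtain ⟨b, hb⟩ := IsIntegrallyClosed.isIntegral_iff.mp (Algebra.isIntegral_norm ℚ hintinv)
  have ha' : ((a : ℚ)) = Algebra.norm ℚ α := by rw [← ha, algebraMap_int_eq]; rfl
  have hb' : ((b : ℚ)) = Algebra.norm ℚ (α⁻¹ : F) := by rw [← hb, algebraMap_int_eq]; rfl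
  have hab : a * b = 1 := by
    have h1 : ((a * b : ℤ) : ℚ) = 1 := by
      push_cast
      rw [ha', hb', ← map_mul (Algebra.norm ℚ), mul_inv_cancel₀ hαne, map_one]
    exact_mod_cast h1
  have ha1 : a = 1 ∨ a = -1 := Int.isUnit_iff.mp (IsUnit.of_mul_eq_one (a := a) b hab)
  have hrpow : r ^ (2 * Fintype.card (F →ₐ[ℚ] ℂ)) = 1 := by
    rw [← habsnorm, ← ha']
    rcases ha1 with h | h <;> rw [h] <;> norm_num
  have hr1 : r = 1 := by
    have hr0 : (0:ℝ) ≤ r := norm_nonneg _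
    have hne : 2 * Fintype.card (F →ₐ[ℚ] ℂ) ≠ 0 := by omega
    rcases lt_trichotomy r 1 with h | h | h
    · have := pow_lt_one₀ hr0 h hne
      rw [hrpow] at this; norm_num at this
    · exact h
    · have := one_lt_pow₀ h hne
      rw [hrpow] at this; norm_num at this
  have habs1 : ∀ i, i ≠ 0 → ‖x i‖ = 1 := by
    intro i hi
    rw [habs i 1 hi hone, ← hrdef]
    exact hr1
  refine ⟨?_, habs1⟩
  -- now show x 0 = 1
  have habs0 : ‖x 0‖ = 1 := by
    have h1 : ∏ i, ‖x i‖ = 1 := by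
      rw [← norm_prod, hprod, norm_one]
    rw [← Finset.mul_prod_erase _ _ (Finset.mem_univ 0)] at h1
    have h2 : ∏ i ∈ Finset.univ.erase 0, ‖x i‖ = 1 :=
      Finset.prod_eq_one fun i hi => habs1 i (Finset.ne_of_mem_erase hi)
    rw [h2, mul_one] at h1
    exact h1
  have hx0re : x 0 = ((x 0).re : ℂ) := Complex.ext rfl (by simp [hreal])
  have habsre : |(x 0).re| = 1 := by
    rw [hx0re, Complex.norm_real, Real.norm_eq_abs] at habs0
    exact habs0
  rcases (abs_eq (by norm_num : (0:ℝ) ≤ 1)).mp habsre with h1 | h1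
  · rw [hx0re, h1]; norm_num
  · exfalso
    have hx0 : x 0 = -1 := by rw [hx0re, h1]; norm_num
    -- -1 is an integer root of p
    have hproot : p.IsRoot (-1) := by
      have h2 : P.eval (-1 : ℂ) = 0 := by
        rw [hroots, eval_prod]
        refine Finset.prod_eq_zero (Finset.mem_univ 0) ?_
        rw [eval_sub, eval_X, eval_C, hx0]; ring
      have h3 : ((p.eval (-1) : ℤ) : ℂ) = 0 := by
        rw [← h2, hPdef, eval_map]
        rw [show ((-1 : ℂ)) = (Int.castRingHom ℂ) (-1) by simp]
        rw [Polynomial.eval₂_hom]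
        simp
      exact_mod_cast h3
    have hdvd : (X + 1 : ℤ[X]) ∣ p := by
      have h2 := Polynomial.dvd_iff_isRoot.mpr hproot
      simpa [map_neg, sub_neg_eq_add] using h2
    obtain ⟨q, hq⟩ := hdvd
    have hqmonic : q.Monic := (monic_X_add_C (1:ℤ)).of_mul_monic_left (hq ▸ hmonic)
    have hq0 : q.coeff 0 = -1 := by
      have h2 := congrArg (fun f => Polynomial.coeff f 0) hq
      simp only [Polynomial.mul_coeff_zero, coeff_add, coeff_X_zero, coeff_one, hconst] at h2
      simpa using h2.symm
    have hqc : q.map (Int.castRingHom ℂ) = ∏ i ∈ Finset.univ.erase 0, (X - C (x i)) := by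
      have hXne : (X + 1 : ℂ[X]) ≠ 0 := (monic_X_add_C (1:ℂ)).ne_zero
      apply mul_left_cancel₀ hXne
      have h1 : (X + 1 : ℂ[X]) * q.map (Int.castRingHom ℂ) = P := by
        rw [hPdef, hq, Polynomial.map_mul]
        congr 1
        simp [Polynomial.map_add]
      rw [h1, hroots, ← Finset.mul_prod_erase _ _ (Finset.mem_univ 0), hx0]
      congr 1
      simp [map_neg, sub_neg_eq_add]
    set qR : ℝ[X] := q.map (Int.castRingHom ℝ) with hqRdef
    have hqR0 : qR.eval 0 = -1 := by
      rw [hqRdef, eval_map]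
      rw [show (0:ℝ) = (Int.castRingHom ℝ) 0 by simp]
      rw [Polynomial.eval₂_hom, ← Polynomial.coeff_zero_eq_eval_zero, hq0]
      simp
    have hnoroot : ∀ t : ℝ, t ≤ 0 → qR.eval t ≠ 0 := by
      intro t ht h0
      have h1 : q.map (Int.castRingHom ℂ) = qR.map Complex.ofRealHom := by
        have e : Complex.ofRealHom.comp (Int.castRingHom ℝ) = Int.castRingHom ℂ :=
          Subsingleton.elim _ _
        rw [hqRdef, Polynomial.map_map, e]
      have hC : (q.map (Int.castRingHom ℂ)).eval (t : ℂ) = 0 := by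
        rw [h1, eval_map, show ((t : ℂ)) = Complex.ofRealHom t from rfl,
          Polynomial.eval₂_hom, h0, map_zero]
      rw [hqc, eval_prod] at hC
      obtain ⟨i, hi, hieq⟩ := Finset.prod_eq_zero_iff.mp hC
      rw [eval_sub, eval_X, eval_C, sub_eq_zero] at hieq
      have hi0 : i ≠ 0 := Finset.ne_of_mem_erase hi
      have habsi : ‖x i‖ = 1 := habs1 i hi0
      rw [← hieq, Complex.norm_real, Real.norm_eq_abs] at habsi
      have ht1 : t = -1 := by
        rcases (abs_eq (by norm_num : (0:ℝ) ≤ 1)).mp habsi with h | h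
        · linarith
        · exact h
      apply hsimple i hi0
      rw [← hieq, ht1, hx0]
      norm_num
    have hqdeg : q.natDegree = 2*n := by
      have h2 : ((X + 1 : ℤ[X]) * q).natDegree = 1 + q.natDegree := by
        have h3 := Polynomial.Monic.natDegree_mul (monic_X_add_C (1:ℤ)) hqmonic
        rw [natDegree_X_add_C] at h3
        simpa using h3
      have hdeg' := hdeg
      rw [hq, h2] at hdeg'
      omega
    have hqRmonic : qR.Monic := hqmonic.map _
    have hqRdeg : qR.natDegree = 2*n := by
      rw [hqRdef, hqmonic.natDegree_map]
      exact hqdeg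
    set s : ℝ[X] := qR.comp (-X) with hsdef
    have hseval : ∀ u : ℝ, s.eval u = qR.eval (-u) := by
      intro u; rw [hsdef, eval_comp]; simp
    have hsnd : s.natDegree = 2*n := by
      rw [hsdef, natDegree_comp]
      simp [hqRdeg]
    have hsdeg : 0 < s.degree := by
      rw [← natDegree_pos_iff_degree_pos, hsnd]
      omega
    have hXnd : (-X : ℝ[X]).natDegree ≠ 0 := by
      rw [natDegree_neg, natDegree_X]; omega
    have hslead : 0 ≤ s.leadingCoeff := by
      rw [hsdef, leadingCoeff_comp hXnd, hqRmonic.leadingCoeff, hqRdeg]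
      have hL : (-X : ℝ[X]).leadingCoeff = -1 := by
        rw [leadingCoeff_neg, leadingCoeff_X]
      rw [hL]
      rw [Even.neg_one_pow ⟨n, by ring⟩]
      norm_num
    have htend := Polynomial.tendsto_atTop_of_leadingCoeff_nonneg s hsdeg hslead
    obtain ⟨u, hu2, hu1⟩ :=
      ((htend.eventually_ge_atTop 1).and (Filter.eventually_ge_atTop (1:ℝ))).exists
    have hcont : ContinuousOn (fun t => qR.eval t) (Set.Icc (-u) 0) :=
      (Polynomial.continuous qR).continuousOn
    have hIcc : (0:ℝ) ∈ Set.Icc (qR.eval 0) (qR.eval (-u)) := by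
      constructor
      · rw [hqR0]; norm_num
      · rw [← hseval u]; linarith
    obtain ⟨c, hc, hceval⟩ := intermediate_value_Icc' (by linarith : -u ≤ 0) hcont hIcc
    exact hnoroot c hc.2 hceval
end

section
/- Let g be a real Lie algebra with an abelian complex structure J. Then the commutator ideal g' = [g, g] is an abelian subalgebra; in particular g is 2-step solvable. -/
section AbelianCSAux

variable {g : Type*} [LieRing g] [LieAlgebra ℝ g]

/-- `A`-coordinate of the complexified bracket of `P x = (x, -Jx)` and `Q y = (y, Jy)`. -/
private def acsP (J : g →ₗ[ℝ] g) (x y : g) : g := ⁅x, y⁆ + J ⁅x, J y⁆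

/-- `B`-coordinate of the complexified bracket. -/
private def acsQ (J : g →ₗ[ℝ] g) (x y : g) : g := ⁅x, y⁆ - J ⁅x, J y⁆

variable (J : g →ₗ[ℝ] g)

private lemma acs_h1 (hJ2 : ∀ x, J (J x) = -x) (hab : ∀ x y, ⁅J x, J y⁆ = ⁅x, y⁆)
    (x y : g) : ⁅J x, y⁆ = -⁅x, J y⁆ := by
  have h := hab x (J y)
  rw [hJ2, lie_neg] at h
  rw [← h, neg_neg]

private lemma acs_h1' (hJ2 : ∀ x, J (J x) = -x) (hab : ∀ x y, ⁅J x, J y⁆ = ⁅x, y⁆)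
    (x y : g) : ⁅x, J y⁆ = -⁅J x, y⁆ := by
  rw [acs_h1 J hJ2 hab x y, neg_neg]

private lemma acs_jac3 (u v w : g) : ⁅⁅u, v⁆, w⁆ = ⁅u, ⁅v, w⁆⁆ + ⁅⁅u, w⁆, v⁆ := by
  rw [leibniz_lie u v w, ← lie_skew v ⁅u, w⁆]
  abel

private lemma acs_Li (hJ2 : ∀ x, J (J x) = -x) (hab : ∀ x y, ⁅J x, J y⁆ = ⁅x, y⁆)
    (x y y' : g) :
    ⁅⁅x, y⁆, y'⁆ - ⁅⁅x, J y⁆, J y'⁆ = ⁅⁅x, y'⁆, y⁆ - ⁅⁅x, J y'⁆, J y⁆ := by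
  have h1 := acs_jac3 x y y'
  have h2 := acs_jac3 x (J y) (J y')
  rw [hab] at h2
  rw [h1, h2]; abel

private lemma acs_Lii (hJ2 : ∀ x, J (J x) = -x) (hab : ∀ x y, ⁅J x, J y⁆ = ⁅x, y⁆)
    (x y y' : g) :
    ⁅⁅x, y⁆, J y'⁆ + ⁅⁅x, J y⁆, y'⁆ = ⁅⁅x, y'⁆, J y⁆ + ⁅⁅x, J y'⁆, y⁆ := by
  have h1 := acs_jac3 x y (J y')
  have h2 := acs_jac3 x (J y) y'
  rw [h1, h2, acs_h1 J hJ2 hab y y', lie_neg]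
  abel

private lemma acs_Liii (hJ2 : ∀ x, J (J x) = -x) (hab : ∀ x y, ⁅J x, J y⁆ = ⁅x, y⁆)
    (x x' y : g) :
    ⁅x, ⁅x', y⁆⁆ + ⁅J x, ⁅x', J y⁆⁆ = ⁅x', ⁅x, y⁆⁆ + ⁅J x', ⁅x, J y⁆⁆ := by
  calc ⁅x, ⁅x', y⁆⁆ + ⁅J x, ⁅x', J y⁆⁆
      = (⁅⁅x, x'⁆, y⁆ + ⁅x', ⁅x, y⁆⁆) + ⁅J x, -⁅J x', y⁆⁆ := by
        rw [leibniz_lie x x' y, acs_h1' J hJ2 hab x' y]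
    _ = (⁅⁅x, x'⁆, y⁆ + ⁅x', ⁅x, y⁆⁆) - (⁅⁅J x, J x'⁆, y⁆ + ⁅J x', ⁅J x, y⁆⁆) := by
        rw [lie_neg, leibniz_lie (J x) (J x') y]; abel
    _ = (⁅⁅x, x'⁆, y⁆ + ⁅x', ⁅x, y⁆⁆) - ⁅⁅x, x'⁆, y⁆ - ⁅J x', -⁅x, J y⁆⁆ := by
        rw [hab, acs_h1 J hJ2 hab x y]; abel
    _ = ⁅x', ⁅x, y⁆⁆ + ⁅J x', ⁅x, J y⁆⁆ := by rw [lie_neg]; abel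

private lemma acs_Liv (hJ2 : ∀ x, J (J x) = -x) (hab : ∀ x y, ⁅J x, J y⁆ = ⁅x, y⁆)
    (x x' y : g) :
    ⁅x, ⁅x', J y⁆⁆ - ⁅J x, ⁅x', y⁆⁆ = ⁅x', ⁅x, J y⁆⁆ - ⁅J x', ⁅x, y⁆⁆ := by
  calc ⁅x, ⁅x', J y⁆⁆ - ⁅J x, ⁅x', y⁆⁆
      = (⁅⁅x, x'⁆, J y⁆ + ⁅x', ⁅x, J y⁆⁆) - ⁅J x, ⁅J x', J y⁆⁆ := by
        rw [leibniz_lie x x' (J y), hab]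
    _ = (⁅⁅x, x'⁆, J y⁆ + ⁅x', ⁅x, J y⁆⁆) - (⁅⁅J x, J x'⁆, J y⁆ + ⁅J x', ⁅J x, J y⁆⁆) := by
        rw [leibniz_lie (J x) (J x') (J y)]
    _ = ⁅x', ⁅x, J y⁆⁆ - ⁅J x', ⁅x, y⁆⁆ := by rw [hab, hab]; abel

/-- Normal form for `acsP (acsP x y) y'`. -/
private lemma acs_PPexp (hJ2 : ∀ x, J (J x) = -x) (hab : ∀ x y, ⁅J x, J y⁆ = ⁅x, y⁆)
    (x y y' : g) :
    acsP J (acsP J x y) y' =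
      (⁅⁅x, y⁆, y'⁆ - ⁅⁅x, J y⁆, J y'⁆) + J (⁅⁅x, y⁆, J y'⁆ + ⁅⁅x, J y⁆, y'⁆) := by
  simp only [acsP, add_lie, map_add]
  rw [acs_h1 J hJ2 hab ⁅x, J y⁆ y', hab ⁅x, J y⁆ y']
  abel

/-- Normal form for `acsQ (acsP x y) y'`. -/
private lemma acs_QPexp (hJ2 : ∀ x, J (J x) = -x) (hab : ∀ x y, ⁅J x, J y⁆ = ⁅x, y⁆)
    (x y y' : g) :
    acsQ J (acsP J x y) y' =
      (⁅⁅x, y⁆, y'⁆ - ⁅⁅x, J y⁆, J y'⁆) - J (⁅⁅x, y⁆, J y'⁆ + ⁅⁅x, J y⁆, y'⁆) := by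
  simp only [acsP, acsQ, add_lie, map_add]
  rw [acs_h1 J hJ2 hab ⁅x, J y⁆ y', hab ⁅x, J y⁆ y']
  abel

/-- Normal form for `acsP x (acsQ x' y)`. -/
private lemma acs_PQexp (hJ2 : ∀ x, J (J x) = -x) (hab : ∀ x y, ⁅J x, J y⁆ = ⁅x, y⁆)
    (x x' y : g) :
    acsP J x (acsQ J x' y) =
      (⁅x, ⁅x', y⁆⁆ + ⁅J x, ⁅x', J y⁆⁆) + J (⁅x, ⁅x', J y⁆⁆ - ⁅J x, ⁅x', y⁆⁆) := by
  simp only [acsP, acsQ, lie_sub, map_sub, map_add, hJ2]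
  rw [acs_h1' J hJ2 hab x ⁅x', J y⁆, acs_h1' J hJ2 hab x ⁅x', y⁆]
  simp only [lie_neg, map_neg, sub_neg_eq_add]
  abel

private lemma acs_J2A (hJ2 : ∀ x, J (J x) = -x) (hab : ∀ x y, ⁅J x, J y⁆ = ⁅x, y⁆)
    (x y y' : g) : acsP J (acsP J x y) y' = acsP J (acsP J x y') y := by
  rw [acs_PPexp J hJ2 hab x y y', acs_PPexp J hJ2 hab x y' y,
    acs_Li J hJ2 hab x y y', acs_Lii J hJ2 hab x y y']

private lemma acs_J2B (hJ2 : ∀ x, J (J x) = -x) (hab : ∀ x y, ⁅J x, J y⁆ = ⁅x, y⁆)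
    (x y y' : g) : acsQ J (acsP J x y) y' = acsQ J (acsP J x y') y := by
  rw [acs_QPexp J hJ2 hab x y y', acs_QPexp J hJ2 hab x y' y,
    acs_Li J hJ2 hab x y y', acs_Lii J hJ2 hab x y y']

private lemma acs_J1A (hJ2 : ∀ x, J (J x) = -x) (hab : ∀ x y, ⁅J x, J y⁆ = ⁅x, y⁆)
    (x x' y : g) : acsP J x (acsQ J x' y) = acsP J x' (acsQ J x y) := by
  rw [acs_PQexp J hJ2 hab x x' y, acs_PQexp J hJ2 hab x' x y,
    acs_Liii J hJ2 hab x x' y, acs_Liv J hJ2 hab x x' y]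

private lemma acs_bswap (hJ2 : ∀ x, J (J x) = -x) (hab : ∀ x y, ⁅J x, J y⁆ = ⁅x, y⁆)
    (x y z w : g) :
    acsP J (acsP J x y) (acsQ J z w) = acsP J (acsP J x w) (acsQ J z y) := by
  calc acsP J (acsP J x y) (acsQ J z w)
      = acsP J z (acsQ J (acsP J x y) w) := acs_J1A J hJ2 hab (acsP J x y) z w
    _ = acsP J z (acsQ J (acsP J x w) y) := by rw [acs_J2B J hJ2 hab x y w]
    _ = acsP J (acsP J x w) (acsQ J z y) := acs_J1A J hJ2 hab z (acsP J x w) y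

private lemma acs_aswap (hJ2 : ∀ x, J (J x) = -x) (hab : ∀ x y, ⁅J x, J y⁆ = ⁅x, y⁆)
    (x y z w : g) :
    acsP J (acsP J x y) (acsQ J z w) = acsP J (acsP J z y) (acsQ J x w) := by
  calc acsP J (acsP J x y) (acsQ J z w)
      = acsP J (acsP J x (acsQ J z w)) y := acs_J2A J hJ2 hab x y (acsQ J z w)
    _ = acsP J (acsP J z (acsQ J x w)) y := by rw [acs_J1A J hJ2 hab x z w]
    _ = acsP J (acsP J z y) (acsQ J x w) := (acs_J2A J hJ2 hab z y (acsQ J x w)).symm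

private lemma acs_pairswap (hJ2 : ∀ x, J (J x) = -x) (hab : ∀ x y, ⁅J x, J y⁆ = ⁅x, y⁆)
    (x y z w : g) :
    acsP J (acsP J x y) (acsQ J z w) = acsP J (acsP J z w) (acsQ J x y) :=
  (acs_aswap J hJ2 hab x y z w).trans (acs_bswap J hJ2 hab z y x w)

private lemma acs_Psub (a b e f : g) :
    acsP J (a - b) (e - f) = acsP J a e - acsP J a f - acsP J b e + acsP J b f := by
  simp only [acsP, sub_lie, lie_sub, map_sub, map_add]
  abel

private lemma acs_Pantisymm (hJ2 : ∀ x, J (J x) = -x) (hab : ∀ x y, ⁅J x, J y⁆ = ⁅x, y⁆)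
    (c d : g) : acsP J c d - acsP J d c = (2 : ℝ) • ⁅c, d⁆ := by
  have h : ⁅d, J c⁆ = ⁅c, J d⁆ := by
    rw [acs_h1' J hJ2 hab d c, ← lie_skew, neg_neg]
  simp only [acsP, h, ← lie_skew d c, two_smul]
  abel

private lemma acs_Qantisymm (hJ2 : ∀ x, J (J x) = -x) (hab : ∀ x y, ⁅J x, J y⁆ = ⁅x, y⁆)
    (c d : g) : acsQ J c d - acsQ J d c = (2 : ℝ) • ⁅c, d⁆ := by
  have h : ⁅d, J c⁆ = ⁅c, J d⁆ := by
    rw [acs_h1' J hJ2 hab d c, ← lie_skew, neg_neg]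
  simp only [acsQ, h, ← lie_skew d c, two_smul]
  abel

private lemma acs_Psmul (r s : ℝ) (a b : g) :
    acsP J (r • a) (s • b) = (r * s) • acsP J a b := by
  simp only [acsP, smul_lie, lie_smul, map_smul, smul_add, smul_smul, mul_comm]

end AbelianCSAux

/-- If a real Lie algebra `g` admits an abelian complex structure, then its
commutator ideal `[g,g]` is abelian: `[[x,y],[z,w]] = 0` for all `x,y,z,w`.
In particular `g` is 2-step solvable. -/
theorem abelian_cs_commutator_abelian {g : Type*} [LieRing g] [LieAlgebra ℝ g]
    [FiniteDimensional ℝ g]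
    (J : g →ₗ[ℝ] g) (hJ2 : ∀ x, J (J x) = -x)
    (hab : ∀ x y, ⁅J x, J y⁆ = ⁅x, y⁆) :
    ∀ x y z w : g, ⁅⁅x, y⁆, ⁅z, w⁆⁆ = 0 := by
  intro x y z w
  have E : acsP J (acsP J x y - acsP J y x) (acsQ J z w - acsQ J w z)
      = acsP J (acsP J z w - acsP J w z) (acsQ J x y - acsQ J y x) := by
    rw [acs_Psub, acs_Psub,
      acs_pairswap J hJ2 hab x y z w, acs_pairswap J hJ2 hab x y w z,
      acs_pairswap J hJ2 hab y x z w, acs_pairswap J hJ2 hab y x w z]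
    abel
  rw [acs_Pantisymm J hJ2 hab x y, acs_Qantisymm J hJ2 hab z w,
    acs_Pantisymm J hJ2 hab z w, acs_Qantisymm J hJ2 hab x y,
    acs_Psmul, acs_Psmul] at E
  have E2 : acsP J ⁅x, y⁆ ⁅z, w⁆ = acsP J ⁅z, w⁆ ⁅x, y⁆ :=
    smul_right_injective g (by norm_num : (2 * 2 : ℝ) ≠ 0) E
  have E3 := acs_Pantisymm J hJ2 hab ⁅x, y⁆ ⁅z, w⁆
  rw [E2, sub_self] at E3
  have E4 : (2 : ℝ) • ⁅⁅x, y⁆, ⁅z, w⁆⁆ = 0 := E3.symm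
  rcases smul_eq_zero.mp E4 with h | h
  · norm_num at h
  · exact h
end

section
/- Let g be a real Lie algebra with an abelian complex structure J. Then g' ∩ J(g') is contained in the center of the subalgebra g' + J(g'). -/
set_option linter.unusedSectionVars false

namespace AbCSAux

variable {g : Type*} [LieRing g] [LieAlgebra ℝ g]

def Pb (J : g →ₗ[ℝ] g) (x y : g) : g := ⁅x, y⁆ - J ⁅J x, y⁆
def Qb (J : g →ₗ[ℝ] g) (x y : g) : g := ⁅x, y⁆ + J ⁅J x, y⁆

variable (J : g →ₗ[ℝ] g) (hJ2 : ∀ x, J (J x) = -x) (hab : ∀ x y, ⁅J x, J y⁆ = ⁅x, y⁆)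

include hJ2 hab

theorem h2 (u v : g) : ⁅J u, v⁆ = -⁅u, J v⁆ := by
  have h := hab u (J v)
  rw [hJ2 v, lie_neg] at h
  rw [← h, neg_neg]

theorem h2r (u v : g) : ⁅u, J v⁆ = -⁅J u, v⁆ := by
  rw [h2 J hJ2 hab u v, neg_neg]

theorem h2s (u v : g) : ⁅u, J v⁆ = ⁅v, J u⁆ := by
  rw [h2r J hJ2 hab u v, lie_skew]

theorem E1 (x y y' : g) :
    ⁅⁅x, y⁆, y'⁆ + ⁅⁅J x, y⁆, J y'⁆ = ⁅⁅x, y'⁆, y⁆ + ⁅⁅J x, y'⁆, J y⁆ := by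
  simp only [lie_lie]
  rw [hab x y', hab x y, h2s J hJ2 hab y' y]
  rw [show ⁅y', y⁆ = -⁅y, y'⁆ from (lie_skew y' y).symm, lie_neg]
  rw [leibniz_lie x y y']
  rw [show ⁅y', ⁅x, y⁆⁆ = -⁅⁅x, y⁆, y'⁆ from (lie_skew y' ⁅x, y⁆).symm]
  abel

theorem E2 (x y y' : g) :
    ⁅⁅J x, y⁆, y'⁆ - ⁅⁅x, y⁆, J y'⁆ = ⁅⁅J x, y'⁆, y⁆ - ⁅⁅x, y'⁆, J y⁆ := by
  simp only [lie_lie]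
  rw [h2s J hJ2 hab y' y, h2r J hJ2 hab x y', h2r J hJ2 hab x y]
  simp only [lie_neg]
  rw [show ⁅y', y⁆ = -⁅y, y'⁆ from (lie_skew y' y).symm, lie_neg]
  rw [leibniz_lie (J x) y y']
  rw [show ⁅y', ⁅J x, y⁆⁆ = -⁅⁅J x, y⁆, y'⁆ from (lie_skew y' ⁅J x, y⁆).symm]
  abel

theorem E3 (x x' y : g) :
    ⁅x, ⁅x', y⁆⁆ - ⁅J x, ⁅J x', y⁆⁆ = ⁅x', ⁅x, y⁆⁆ - ⁅J x', ⁅J x, y⁆⁆ := by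
  rw [leibniz_lie x x' y, leibniz_lie (J x) (J x') y, hab x x']
  abel

theorem E4 (x x' y : g) :
    ⁅J x, ⁅x', y⁆⁆ + ⁅x, ⁅J x', y⁆⁆ = ⁅J x', ⁅x, y⁆⁆ + ⁅x', ⁅J x, y⁆⁆ := by
  rw [leibniz_lie (J x) x' y, leibniz_lie x (J x') y, h2r J hJ2 hab x x', neg_lie]
  abel

theorem expP (x y y' : g) :
    Pb J (Pb J x y) y' =
      ⁅⁅x, y⁆, y'⁆ + ⁅⁅J x, y⁆, J y'⁆ - J (⁅⁅J x, y⁆, y'⁆ - ⁅⁅x, y⁆, J y'⁆) := by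
  simp only [Pb, map_sub, hJ2, sub_neg_eq_add, sub_lie, add_lie]
  rw [h2 J hJ2 hab ⁅J x, y⁆ y', h2 J hJ2 hab ⁅x, y⁆ y']
  simp only [map_add, map_sub, map_neg]
  abel

theorem expQ1 (x y y' : g) :
    Qb J (Pb J x y) y' =
      ⁅⁅x, y⁆, y'⁆ + ⁅⁅J x, y⁆, J y'⁆ + J (⁅⁅J x, y⁆, y'⁆ - ⁅⁅x, y⁆, J y'⁆) := by
  simp only [Pb, Qb, map_sub, hJ2, sub_neg_eq_add, sub_lie, add_lie]
  rw [h2 J hJ2 hab ⁅J x, y⁆ y', h2 J hJ2 hab ⁅x, y⁆ y']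
  simp only [map_add, map_sub, map_neg]
  abel

theorem expP2 (x x' y : g) :
    Pb J x (Qb J x' y) =
      ⁅x, ⁅x', y⁆⁆ - ⁅J x, ⁅J x', y⁆⁆ - J (⁅J x, ⁅x', y⁆⁆ + ⁅x, ⁅J x', y⁆⁆) := by
  simp only [Pb, Qb, lie_add]
  rw [h2r J hJ2 hab x ⁅J x', y⁆, hab x ⁅J x', y⁆]
  simp only [map_add, map_sub, map_neg]
  abel

theorem expQ2 (x x' y : g) :
    Qb J x (Qb J x' y) =
      ⁅x, ⁅x', y⁆⁆ - ⁅J x, ⁅J x', y⁆⁆ + J (⁅J x, ⁅x', y⁆⁆ + ⁅x, ⁅J x', y⁆⁆) := by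
  simp only [Pb, Qb, lie_add]
  rw [h2r J hJ2 hab x ⁅J x', y⁆, hab x ⁅J x', y⁆]
  simp only [map_add, map_sub, map_neg]
  abel

theorem R1 (x y y' : g) : Pb J (Pb J x y) y' = Pb J (Pb J x y') y := by
  rw [expP J hJ2 hab x y y', expP J hJ2 hab x y' y,
    E1 J hJ2 hab x y y', E2 J hJ2 hab x y y']

theorem R2 (x y y' : g) : Qb J (Pb J x y) y' = Qb J (Pb J x y') y := by
  rw [expQ1 J hJ2 hab x y y', expQ1 J hJ2 hab x y' y,
    E1 J hJ2 hab x y y', E2 J hJ2 hab x y y']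

theorem R3 (x x' y : g) : Pb J x (Qb J x' y) = Pb J x' (Qb J x y) := by
  rw [expP2 J hJ2 hab x x' y, expP2 J hJ2 hab x' x y,
    E3 J hJ2 hab x x' y, E4 J hJ2 hab x x' y]

theorem R4 (x x' y : g) : Qb J x (Qb J x' y) = Qb J x' (Qb J x y) := by
  rw [expQ2 J hJ2 hab x x' y, expQ2 J hJ2 hab x' x y,
    E3 J hJ2 hab x x' y, E4 J hJ2 hab x x' y]

theorem S1Q (a b c d : g) :
    Qb J (Pb J a b) (Qb J c d) = Qb J (Pb J c b) (Qb J a d) := by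
  rw [R2 J hJ2 hab a b (Qb J c d), R3 J hJ2 hab a c d, R2 J hJ2 hab c (Qb J a d) b]

theorem S3Q (a b c d : g) :
    Qb J (Pb J a b) (Qb J c d) = Qb J (Pb J a d) (Qb J c b) := by
  rw [R4 J hJ2 hab (Pb J a b) c d, R2 J hJ2 hab a b d, R4 J hJ2 hab c (Pb J a d) b]

theorem S1P (a b c d : g) :
    Pb J (Pb J a b) (Qb J c d) = Pb J (Pb J c b) (Qb J a d) := by
  rw [R1 J hJ2 hab a b (Qb J c d), R3 J hJ2 hab a c d, R1 J hJ2 hab c (Qb J a d) b]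

theorem S3P (a b c d : g) :
    Pb J (Pb J a b) (Qb J c d) = Pb J (Pb J a d) (Qb J c b) := by
  rw [R3 J hJ2 hab (Pb J a b) c d, R2 J hJ2 hab a b d, R3 J hJ2 hab c (Pb J a d) b]

theorem GenP (s t x y : g) :
    Pb J (Pb J s t) (Qb J x y) = Pb J (Pb J x y) (Qb J s t) := by
  rw [S1P J hJ2 hab s t x y, S3P J hJ2 hab x t s y]

theorem GenQ (s t x y : g) :
    Qb J (Pb J s t) (Qb J x y) = Qb J (Pb J x y) (Qb J s t) := by
  rw [S1Q J hJ2 hab s t x y, S3Q J hJ2 hab x t s y]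

omit hJ2 hab

theorem Pb_add_left (u v w : g) : Pb J (u + v) w = Pb J u w + Pb J v w := by
  simp only [Pb, map_add, add_lie]; abel

theorem Qb_add_left (u v w : g) : Qb J (u + v) w = Qb J u w + Qb J v w := by
  simp only [Qb, map_add, add_lie]; abel

theorem Pb_add_right (u v w : g) : Pb J u (v + w) = Pb J u v + Pb J u w := by
  simp only [Pb, lie_add, map_add]; abel

theorem Qb_add_right (u v w : g) : Qb J u (v + w) = Qb J u v + Qb J u w := by
  simp only [Qb, lie_add, map_add]; abel

theorem Pb_smul_left (c : ℝ) (u w : g) : Pb J (c • u) w = c • Pb J u w := by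
  simp only [Pb, map_smul, smul_lie, smul_sub]

theorem Qb_smul_left (c : ℝ) (u w : g) : Qb J (c • u) w = c • Qb J u w := by
  simp only [Qb, map_smul, smul_lie, smul_add]

theorem Pb_smul_right (c : ℝ) (u w : g) : Pb J u (c • w) = c • Pb J u w := by
  simp only [Pb, lie_smul, map_smul, smul_sub]

theorem Qb_smul_right (c : ℝ) (u w : g) : Qb J u (c • w) = c • Qb J u w := by
  simp only [Qb, lie_smul, map_smul, smul_add]

theorem Pb_zero_left (w : g) : Pb J 0 w = 0 := by simp [Pb]

theorem Qb_zero_left (w : g) : Qb J 0 w = 0 := by simp [Qb]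

theorem Pb_zero_right (u : g) : Pb J u 0 = 0 := by simp [Pb]

theorem Qb_zero_right (u : g) : Qb J u 0 = 0 := by simp [Qb]

theorem PQ_sum (u v : g) : Pb J u v + Qb J u v = ⁅u, v⁆ + ⁅u, v⁆ := by
  simp only [Pb, Qb]; abel

include hJ2 hab

theorem h2t (u v : g) : ⁅J u, v⁆ = ⁅J v, u⁆ := by
  rw [h2 J hJ2 hab u v, h2s J hJ2 hab u v, ← h2 J hJ2 hab v u]

theorem PbSub (x y : g) : Pb J x y - Pb J y x = ⁅x, y⁆ + ⁅x, y⁆ := by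
  simp only [Pb]
  rw [h2t J hJ2 hab y x, show ⁅y, x⁆ = -⁅x, y⁆ from (lie_skew y x).symm]
  abel

theorem QbSub (x y : g) : Qb J x y - Qb J y x = ⁅x, y⁆ + ⁅x, y⁆ := by
  simp only [Qb]
  rw [h2t J hJ2 hab y x, show ⁅y, x⁆ = -⁅x, y⁆ from (lie_skew y x).symm]
  abel

theorem PbJSub (u v : g) :
    Pb J (J u) v - Pb J (J v) u = J ⁅u, v⁆ + J ⁅u, v⁆ := by
  simp only [Pb, hJ2, neg_lie, map_neg, sub_neg_eq_add]
  rw [h2t J hJ2 hab v u, show ⁅v, u⁆ = -⁅u, v⁆ from (lie_skew v u).symm, map_neg]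
  abel

theorem QbJSub (u v : g) :
    Qb J (J u) v - Qb J (J v) u = -(J ⁅u, v⁆ + J ⁅u, v⁆) := by
  simp only [Qb, hJ2, neg_lie, map_neg]
  rw [h2t J hJ2 hab v u, show ⁅v, u⁆ = -⁅u, v⁆ from (lie_skew v u).symm, map_neg]
  abel

def VV (J : g →ₗ[ℝ] g) : Submodule ℝ (g × g) :=
  Submodule.span ℝ {w : g × g | ∃ s t : g, w = (Pb J s t, Qb J s t)}

omit hJ2 hab

theorem halfg (x : g) (h : x + x = 0) : x = 0 := by
  have h2 : (2 : ℝ) • x = 0 := by rw [two_smul]; exact h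
  rcases smul_eq_zero.mp h2 with h' | h'
  · norm_num at h'
  · exact h'

theorem halfV (p : g × g) (h : p + p ∈ VV J) : p ∈ VV J := by
  have hs := (VV J).smul_mem ((2 : ℝ)⁻¹) h
  rw [show ((2 : ℝ)⁻¹) • (p + p) = p from by
    rw [← two_smul ℝ p, smul_smul, inv_mul_cancel₀ (by norm_num : (2:ℝ) ≠ 0), one_smul]] at hs
  exact hs

include hJ2 hab

theorem claimA (z : g) (hz : z ∈ Submodule.span ℝ {z : g | ∃ x y : g, z = ⁅x, y⁆}) :
    ((z, z) : g × g) ∈ VV J := by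
  induction hz using Submodule.span_induction with
  | mem w hw =>
      obtain ⟨x, y, rfl⟩ := hw
      apply halfV J
      have hm : (Pb J x y, Qb J x y) - (Pb J y x, Qb J y x) ∈ VV J :=
        sub_mem (Submodule.subset_span ⟨x, y, rfl⟩) (Submodule.subset_span ⟨y, x, rfl⟩)
      have he : (Pb J x y, Qb J x y) - (Pb J y x, Qb J y x)
          = ((⁅x, y⁆, ⁅x, y⁆) : g × g) + (⁅x, y⁆, ⁅x, y⁆) := by
        rw [Prod.mk_sub_mk, Prod.mk_add_mk, PbSub J hJ2 hab x y, QbSub J hJ2 hab x y]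
      rwa [he] at hm
  | zero => exact (VV J).zero_mem
  | add u v hu hv ihu ihv => exact add_mem ihu ihv
  | smul c u hu ih => exact (VV J).smul_mem c ih

theorem claimB (z : g) (hz : z ∈ Submodule.span ℝ {z : g | ∃ x y : g, z = ⁅x, y⁆}) :
    ((J z, -(J z)) : g × g) ∈ VV J := by
  induction hz using Submodule.span_induction with
  | mem w hw =>
      obtain ⟨u, v, rfl⟩ := hw
      apply halfV J
      have hm : (Pb J (J u) v, Qb J (J u) v) - (Pb J (J v) u, Qb J (J v) u) ∈ VV J :=
        sub_mem (Submodule.subset_span ⟨J u, v, rfl⟩) (Submodule.subset_span ⟨J v, u, rfl⟩)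
      have he : (Pb J (J u) v, Qb J (J u) v) - (Pb J (J v) u, Qb J (J v) u)
          = ((J ⁅u, v⁆, -(J ⁅u, v⁆)) : g × g) + (J ⁅u, v⁆, -(J ⁅u, v⁆)) := by
        rw [Prod.mk_sub_mk, Prod.mk_add_mk, PbJSub J hJ2 hab u v, QbJSub J hJ2 hab u v,
          neg_add]
      rwa [he] at hm
  | zero =>
      have : ((J 0, -(J 0)) : g × g) = 0 := by simp
      rw [this]; exact (VV J).zero_mem
  | add u v hu hv ihu ihv =>
      rw [map_add, neg_add]
      exact add_mem ihu ihv
  | smul c u hu ih =>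
      rw [map_smul, ← smul_neg]
      exact (VV J).smul_mem c ih

theorem KEY (x y : g) : ∀ w ∈ VV J,
    Pb J w.1 (Qb J x y) = Pb J (Pb J x y) w.2
      ∧ Qb J w.1 (Qb J x y) = Qb J (Pb J x y) w.2 := by
  intro w hw
  induction hw using Submodule.span_induction with
  | mem w hw =>
      obtain ⟨s, t, rfl⟩ := hw
      exact ⟨GenP J hJ2 hab s t x y, GenQ J hJ2 hab s t x y⟩
  | zero =>
      constructor <;> simp [Pb, Qb]
  | add u v hu hv ihu ihv =>
      constructor
      · rw [Prod.fst_add, Prod.snd_add, Pb_add_left J, Pb_add_right J, ihu.1, ihv.1]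
      · rw [Prod.fst_add, Prod.snd_add, Qb_add_left J, Qb_add_right J, ihu.2, ihv.2]
  | smul c u hu ih =>
      constructor
      · rw [Prod.smul_fst, Prod.smul_snd, Pb_smul_left J, Pb_smul_right J, ih.1]
      · rw [Prod.smul_fst, Prod.smul_snd, Qb_smul_left J, Qb_smul_right J, ih.2]

theorem main (a : g) (ha : a ∈ Submodule.span ℝ {z : g | ∃ x y : g, z = ⁅x, y⁆})
    (hJa : J a ∈ Submodule.span ℝ {z : g | ∃ x y : g, z = ⁅x, y⁆}) :
    ∀ z ∈ Submodule.span ℝ {z : g | ∃ x y : g, z = ⁅x, y⁆}, ⁅a, z⁆ = 0 := by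
  have hA : ((a, a) : g × g) ∈ VV J := claimA J hJ2 hab a ha
  have hB : ((a, -a) : g × g) ∈ VV J := by
    have h := claimB J hJ2 hab (-(J a)) (neg_mem hJa)
    rw [map_neg, hJ2, neg_neg] at h
    exact h
  have h20 : ((a + a, 0) : g × g) ∈ VV J := by
    have h := add_mem hA hB
    rw [show ((a, a) : g × g) + (a, -a) = (a + a, 0) from by
      rw [Prod.mk_add_mk, add_neg_cancel]] at h
    exact h
  have h02 : ((0, a + a) : g × g) ∈ VV J := by
    have h := sub_mem hA hB
    rw [show ((a, a) : g × g) - (a, -a) = (0, a + a) from by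
      rw [Prod.mk_sub_mk, sub_self, sub_neg_eq_add]] at h
    exact h
  have G1 : ∀ x y : g, ⁅a, ⁅x, y⁆⁆ = 0 := by
    intro x y
    obtain ⟨k1, k2⟩ := KEY J hJ2 hab x y _ h20
    obtain ⟨k3, k4⟩ := KEY J hJ2 hab x y _ h02
    dsimp only at k1 k2 k3 k4
    rw [Pb_add_left J, Pb_zero_right J] at k1
    have pa : Pb J a (Qb J x y) = 0 := halfg _ k1
    rw [Qb_add_left J, Qb_zero_right J] at k2
    have qa : Qb J a (Qb J x y) = 0 := halfg _ k2
    rw [Pb_zero_left J, Pb_add_right J] at k3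
    have pb : Pb J (Pb J x y) a = 0 := halfg _ k3.symm
    rw [Qb_zero_left J, Qb_add_right J] at k4
    have qb : Qb J (Pb J x y) a = 0 := halfg _ k4.symm
    have l1 : ⁅a, Qb J x y⁆ = 0 := by
      have hs := PQ_sum J a (Qb J x y)
      rw [pa, qa, zero_add] at hs
      exact halfg _ hs.symm
    have l2 : ⁅a, Pb J x y⁆ = 0 := by
      have hs := PQ_sum J (Pb J x y) a
      rw [pb, qb, zero_add] at hs
      have h0 : ⁅Pb J x y, a⁆ = 0 := halfg _ hs.symm
      rw [← lie_skew, h0, neg_zero]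
    have hz : ⁅a, Pb J x y + Qb J x y⁆ = 0 := by rw [lie_add, l2, l1, add_zero]
    rw [PQ_sum J x y, lie_add] at hz
    exact halfg _ hz
  intro z hz
  induction hz using Submodule.span_induction with
  | mem w hw => obtain ⟨x, y, rfl⟩ := hw; exact G1 x y
  | zero => exact lie_zero a
  | add u v hu hv ihu ihv => rw [lie_add, ihu, ihv, add_zero]
  | smul c u hu ih => rw [lie_smul, ih, smul_zero]

end AbCSAux

/-- If `J` is an abelian complex structure on a real Lie algebra `g`, then
`g' ∩ J(g')` is contained in the center of the subalgebra `g' + J(g')`,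
where `g' = [g,g]` is the commutator ideal. -/
theorem abelian_cs_center_of_sum {g : Type*} [LieRing g] [LieAlgebra ℝ g]
    [FiniteDimensional ℝ g]
    (J : g →ₗ[ℝ] g) (hJ2 : ∀ x, J (J x) = -x)
    (hab : ∀ x y, ⁅J x, J y⁆ = ⁅x, y⁆) :
    ∀ a ∈ (Submodule.span ℝ {z : g | ∃ x y : g, z = ⁅x, y⁆}) ⊓
        (Submodule.span ℝ {z : g | ∃ x y : g, z = ⁅x, y⁆}).map J,
      ∀ b ∈ (Submodule.span ℝ {z : g | ∃ x y : g, z = ⁅x, y⁆}) ⊔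
        (Submodule.span ℝ {z : g | ∃ x y : g, z = ⁅x, y⁆}).map J,
      ⁅a, b⁆ = 0 := by
  intro a ha b hb
  rw [Submodule.mem_inf] at ha
  obtain ⟨ha1, ha2⟩ := ha
  obtain ⟨c, hc, hca⟩ := Submodule.mem_map.mp ha2
  have hJa : J a ∈ Submodule.span ℝ {z : g | ∃ x y : g, z = ⁅x, y⁆} := by
    rw [← hca, hJ2 c]; exact neg_mem hc
  have hJJa : J (J a) ∈ Submodule.span ℝ {z : g | ∃ x y : g, z = ⁅x, y⁆} := by
    rw [hJ2 a]; exact neg_mem ha1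
  obtain ⟨u, hu, v, hv, rfl⟩ := Submodule.mem_sup.mp hb
  obtain ⟨w, hw, rfl⟩ := Submodule.mem_map.mp hv
  rw [lie_add, AbCSAux.main J hJ2 hab a ha1 hJa u hu,
    AbCSAux.h2r J hJ2 hab a w, AbCSAux.main J hJ2 hab (J a) hJa hJJa w hw,
    neg_zero, add_zero]
end

section
/- Let (g, J, ⟨·,·⟩) be a Vaisman Lie algebra with unit-norm Lee form θ and Lee vector A (the metric dual of θ). Then [A, JA] = 0. -/
/-- In a Vaisman Lie algebra (LCK with unit-norm Lee form `θ` whose metric dual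
`A` has skew-symmetric adjoint `ad_A`), one has `[A, JA] = 0`. -/

theorem vaisman_bracket_A_JA {g : Type*} [LieRing g] [LieAlgebra ℝ g]
    [FiniteDimensional ℝ g]
    (B : g →ₗ[ℝ] g →ₗ[ℝ] ℝ)
    (hsymm : ∀ x y, B x y = B y x)
    (hpos : ∀ x : g, x ≠ 0 → 0 < B x x)
    (J : g →ₗ[ℝ] g) (hJ2 : ∀ x, J (J x) = -x)
    (hint : ∀ x y : g, ⁅J x, J y⁆ - ⁅x, y⁆ - J (⁅J x, y⁆ + ⁅x, J y⁆) = 0)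
    (hherm : ∀ x y, B (J x) (J y) = B x y)
    (θ : g →ₗ[ℝ] ℝ) (hθ : θ ≠ 0)
    (hclosed : ∀ x y : g, θ ⁅x, y⁆ = 0)
    (hlck : ∀ x y z : g,
      -(B (J ⁅x, y⁆) z) - B (J ⁅y, z⁆) x - B (J ⁅z, x⁆) y
        = θ x * B (J y) z + θ y * B (J z) x + θ z * B (J x) y)
    (A : g) (hdual : ∀ x, θ x = B A x) (hunit : B A A = 1)
    (hvaisman : ∀ x y : g, B ⁅A, x⁆ y = -B x ⁅A, y⁆) :
    ⁅A, J A⁆ = 0 := by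
  -- `B (J u) A = - B u (J A)` for all u
  have hJA : ∀ u : g, B (J u) A = - B u (J A) := by
    intro u
    have h := hherm (J u) A
    rw [hJ2] at h
    simpa [map_neg] using h.symm
  -- `B A (J A) = 0`
  have hAJA : B A (J A) = 0 := by
    have h := hJA A
    rw [hsymm (J A) A] at h
    linarith
  -- closedness in `B` form
  have hcB : ∀ x y : g, B A ⁅x, y⁆ = 0 := fun x y => (hdual ⁅x, y⁆) ▸ hclosed x y
  -- Step: for all z, B (J ⁅A, J A⁆) z = B ⁅J A, z⁆ (J A)
  have key1 : ∀ z : g, B (J ⁅A, J A⁆) z = B ⁅J A, z⁆ (J A) := by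
    intro z
    have h := hlck A (J A) z
    have e1 : θ A = 1 := by rw [hdual]; exact hunit
    have e2 : θ (J A) = 0 := by rw [hdual]; exact hAJA
    have e3 : B (J A) (J A) = 1 := by rw [hherm]; exact hunit
    have e4 : B (J (J A)) z = -θ z := by rw [hJ2, hdual]; simp [map_neg]
    have e5 : B (J ⁅z, A⁆) (J A) = 0 := by
      rw [hherm, hsymm]; exact hcB z A
    have e6 : B (J ⁅J A, z⁆) A = - B ⁅J A, z⁆ (J A) := hJA _
    rw [e1, e2, e3, e4, e5, e6] at h
    linarith
  -- Step: for all w, B ⁅J A, J w⁆ (J A) = B ⁅A, w⁆ (J A)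
  have key2 : ∀ w : g, B ⁅J A, J w⁆ (J A) = B ⁅A, w⁆ (J A) := by
    intro w
    have h := hint A w
    have h' : ⁅J A, J w⁆ = ⁅A, w⁆ + J (⁅J A, w⁆ + ⁅A, J w⁆) := by
      rw [sub_sub, sub_eq_zero] at h
      rw [h]
    rw [h', map_add]
    have t1 : B (J ⁅J A, w⁆) (J A) = 0 := by rw [hherm, hsymm]; exact hcB _ _
    have t2 : B (J ⁅A, J w⁆) (J A) = 0 := by rw [hherm, hsymm]; exact hcB _ _
    simp [map_add, t1, t2]
  -- conclude B ⁅A, J A⁆ w = 0 for all w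
  have key : ∀ w : g, B ⁅A, J A⁆ w = 0 := by
    intro w
    have h1 : B ⁅A, J A⁆ w = B (J ⁅A, J A⁆) (J w) := (hherm _ _).symm
    have h2 := key1 (J w)
    have h3 := key2 w
    have h4 : B ⁅A, w⁆ (J A) = - B ⁅A, J A⁆ w := by
      rw [hsymm]
      have := hvaisman (J A) w
      linarith
    linarith
  by_contra hne
  have := hpos _ hne
  rw [key ⁅A, J A⁆] at this
  exact lt_irrefl 0 this
end

section
/- Let (g, J, ⟨·,·⟩) be a Vaisman Lie algebra with Lee vector A. Then ad_A commutes with J: J(ad_A(x)) = ad_A(Jx) for all x ∈ g. -/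
/-- In a Vaisman Lie algebra with Lee vector `A`, the endomorphism `ad_A`
commutes with the complex structure: `J([A,x]) = [A, Jx]` for all `x`. -/

theorem vaisman_adA_commutes_J {g : Type*} [LieRing g] [LieAlgebra ℝ g]
    [FiniteDimensional ℝ g]
    (B : g →ₗ[ℝ] g →ₗ[ℝ] ℝ)
    (hsymm : ∀ x y, B x y = B y x)
    (hpos : ∀ x : g, x ≠ 0 → 0 < B x x)
    (J : g →ₗ[ℝ] g) (hJ2 : ∀ x, J (J x) = -x)
    (hint : ∀ x y : g, ⁅J x, J y⁆ - ⁅x, y⁆ - J (⁅J x, y⁆ + ⁅x, J y⁆) = 0)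
    (hherm : ∀ x y, B (J x) (J y) = B x y)
    (θ : g →ₗ[ℝ] ℝ) (hθ : θ ≠ 0)
    (hclosed : ∀ x y : g, θ ⁅x, y⁆ = 0)
    (hlck : ∀ x y z : g,
      -(B (J ⁅x, y⁆) z) - B (J ⁅y, z⁆) x - B (J ⁅z, x⁆) y
        = θ x * B (J y) z + θ y * B (J z) x + θ z * B (J x) y)
    (A : g) (hdual : ∀ x, θ x = B A x) (hunit : B A A = 1)
    (hvaisman : ∀ x y : g, B ⁅A, x⁆ y = -B x ⁅A, y⁆) :
    ∀ x : g, J ⁅A, x⁆ = ⁅A, J x⁆ := by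
  -- J can be moved across B with a sign
  have h1 : ∀ u v : g, B (J u) v = -(B u (J v)) := by
    intro u v
    have h := hherm u (J v)
    rw [hJ2] at h
    simp only [map_neg] at h
    linarith
  intro x
  have key : ∀ y : g, B (J ⁅A, x⁆) y = B ⁅A, J x⁆ y := by
    intro y
    have E1 := hlck A x y
    have E2 := hlck A (J x) (J y)
    have hbr : ⁅J x, J y⁆ = ⁅x, y⁆ + J (⁅J x, y⁆ + ⁅x, J y⁆) := by
      have h := hint x y
      rw [sub_sub, sub_eq_zero] at h
      exact h
    -- conversions for E1
    have c1 : B (J ⁅x, y⁆) A = -(B ⁅x, y⁆ (J A)) := h1 _ _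
    have c2 : B (J ⁅y, A⁆) x = -(B ⁅A, J x⁆ y) := by
      have h' : ⁅y, A⁆ = -⁅A, y⁆ := by rw [← lie_skew]
      rw [h', map_neg, map_neg, LinearMap.neg_apply, h1, hvaisman, hsymm]
      ring
    have c3 : θ A = 1 := by rw [hdual]; exact hunit
    have c4 : B (J y) A = θ (J y) := by rw [hsymm (J y) A, ← hdual]
    have c5 : B (J A) x = -(θ (J x)) := by rw [h1, ← hdual]
    -- conversions for E2
    have d1 : B (J ⁅A, J x⁆) (J y) = B ⁅A, J x⁆ y := hherm _ _
    have d2 : B (J ⁅J x, J y⁆) A = -(B ⁅x, y⁆ (J A)) := by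
      rw [h1, hbr]
      have hw : B (J (⁅J x, y⁆ + ⁅x, J y⁆)) (J A) = 0 := by
        rw [hherm, hsymm, ← hdual]
        simp [hclosed]
      rw [map_add, LinearMap.add_apply, hw]
      ring
    have d3 : B (J ⁅J y, A⁆) (J x) = -(B (J ⁅A, x⁆) y) := by
      have h' : ⁅J y, A⁆ = -⁅A, J y⁆ := by rw [← lie_skew]
      rw [h', map_neg, map_neg, LinearMap.neg_apply, hherm, hvaisman, h1, hsymm]
      ring
    have d4 : B (J (J x)) (J y) = B (J x) y := by
      rw [hJ2, map_neg, LinearMap.neg_apply, h1]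
    have d5 : B (J (J y)) A = -(θ y) := by
      rw [hJ2, map_neg, LinearMap.neg_apply, hsymm y A, ← hdual]
    have d6 : B (J A) (J x) = θ x := by rw [hherm, ← hdual]
    rw [c1, c2, c3, c4, c5] at E1
    rw [c3, d1, d2, d3, d4, d5, d6] at E2
    linarith
  have hz : B (J ⁅A, x⁆ - ⁅A, J x⁆) (J ⁅A, x⁆ - ⁅A, J x⁆) = 0 := by
    have := key (J ⁅A, x⁆ - ⁅A, J x⁆)
    simp only [map_sub, LinearMap.sub_apply] at this ⊢
    linarith
  by_contra hne
  have : J ⁅A, x⁆ - ⁅A, J x⁆ ≠ 0 := sub_ne_zero.mpr hne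
  exact absurd hz (ne_of_gt (hpos _ this))
end

section
/- Let (g, J, ⟨·,·⟩) be a Vaisman Lie algebra with Lee vector A. Then ad_{JA} is skew-symmetric with respect to ⟨·,·⟩ and commutes with J. -/
/-- In a Vaisman Lie algebra with Lee vector `A`, the endomorphism `ad_{JA}` is
skew-symmetric with respect to the inner product and commutes with `J`. -/

theorem vaisman_adJA_skew_and_commutes {g : Type*} [LieRing g] [LieAlgebra ℝ g]
    [FiniteDimensional ℝ g]
    (B : g →ₗ[ℝ] g →ₗ[ℝ] ℝ)
    (hsymm : ∀ x y, B x y = B y x)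
    (hpos : ∀ x : g, x ≠ 0 → 0 < B x x)
    (J : g →ₗ[ℝ] g) (hJ2 : ∀ x, J (J x) = -x)
    (hint : ∀ x y : g, ⁅J x, J y⁆ - ⁅x, y⁆ - J (⁅J x, y⁆ + ⁅x, J y⁆) = 0)
    (hherm : ∀ x y, B (J x) (J y) = B x y)
    (θ : g →ₗ[ℝ] ℝ) (hθ : θ ≠ 0)
    (hclosed : ∀ x y : g, θ ⁅x, y⁆ = 0)
    (hlck : ∀ x y z : g,
      -(B (J ⁅x, y⁆) z) - B (J ⁅y, z⁆) x - B (J ⁅z, x⁆) y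
        = θ x * B (J y) z + θ y * B (J z) x + θ z * B (J x) y)
    (A : g) (hdual : ∀ x, θ x = B A x) (hunit : B A A = 1)
    (hvaisman : ∀ x y : g, B ⁅A, x⁆ y = -B x ⁅A, y⁆) :
    (∀ x y : g, B ⁅J A, x⁆ y = -B x ⁅J A, y⁆) ∧
    (∀ x : g, J ⁅J A, x⁆ = ⁅J A, J x⁆) := by
  -- B(Jx, y) = -B(x, Jy)
  have hJskew : ∀ x y : g, B (J x) y = -B x (J y) := by
    intro x y
    have h := hherm (J x) y
    rw [hJ2] at h
    simpa using h.symm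
  -- A ⟂ [g,g]
  have hbrA : ∀ x y : g, B A ⁅x, y⁆ = 0 := by
    intro x y; rw [← hdual]; exact hclosed x y
  -- B(A, JA) = 0
  have hθJA : B A (J A) = 0 := by
    have h1 := hJskew A A
    have h2 := hsymm A (J A)
    linarith
  -- B(A, Jx) = -B(JA, x)
  have hAJ : ∀ x : g, B A (J x) = -B (J A) x := by
    intro x
    have h1 := hsymm A (J x)
    have h2 := hJskew x A
    have h3 := hsymm x (J A)
    linarith
  -- (II): B([JA,x], Jy) symmetric in x,y
  have hII : ∀ x y : g, B ⁅J A, x⁆ (J y) = B ⁅J A, y⁆ (J x) := by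
    intro x y
    have h := hlck x y (J A)
    have e1 : B (J ⁅x, y⁆) (J A) = 0 := by rw [hherm, hsymm]; exact hbrA x y
    have e2 : B (J ⁅y, J A⁆) x = B ⁅J A, y⁆ (J x) := by
      rw [hJskew, show ⁅y, J A⁆ = -⁅J A, y⁆ from (lie_skew _ _).symm,
        map_neg, LinearMap.neg_apply, neg_neg]
    have e3 : B (J ⁅J A, x⁆) y = -B ⁅J A, x⁆ (J y) := hJskew _ _
    have e4 : B (J y) (J A) = B A y := by rw [hherm y A, hsymm]
    have e5 : B (J (J A)) x = -B A x := by rw [hJ2]; simp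
    have e6 : θ (J A) = 0 := by rw [hdual]; exact hθJA
    rw [e1, e2, e3, e4, e5, e6, hdual x, hdual y] at h
    linear_combination h
  -- (I): from dω = θ ∧ ω at z = A
  have hI : ∀ x y : g, B ⁅x, y⁆ (J A) - B ⁅A, y⁆ (J x) + B ⁅A, x⁆ (J y)
      = -(B A x * B (J A) y) + B A y * B (J A) x + B (J x) y := by
    intro x y
    have h := hlck x y A
    have e1 : B (J ⁅x, y⁆) A = -B ⁅x, y⁆ (J A) := hJskew _ _
    have e2 : B (J ⁅y, A⁆) x = B ⁅A, y⁆ (J x) := by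
      rw [hJskew, show ⁅y, A⁆ = -⁅A, y⁆ from (lie_skew _ _).symm,
        map_neg, LinearMap.neg_apply, neg_neg]
    have e3 : B (J ⁅A, x⁆) y = -B ⁅A, x⁆ (J y) := hJskew _ _
    have e4 : B (J y) A = -B y (J A) := hJskew _ _
    have e5 : B y (J A) = B (J A) y := hsymm _ _
    have e6 : θ A = 1 := by rw [hdual]; exact hunit
    rw [e1, e2, e3, e4, e5, e6, hdual x, hdual y] at h
    linear_combination h
  -- (III): apply (I) to Jx, Jy and simplify via integrability
  have hIII : ∀ x y : g, B ⁅x, y⁆ (J A) + B ⁅A, J y⁆ x - B ⁅A, J x⁆ y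
      = -(B A x * B (J A) y) + B A y * B (J A) x + B (J x) y := by
    intro x y
    have h := hI (J x) (J y)
    have eint : ⁅J x, J y⁆ = ⁅x, y⁆ + J (⁅J x, y⁆ + ⁅x, J y⁆) := by
      have h0 := hint x y
      rw [sub_sub] at h0
      exact sub_eq_zero.mp h0
    have e0 : B ⁅J x, J y⁆ (J A) = B ⁅x, y⁆ (J A) := by
      rw [eint]
      have t1 : B (J ⁅J x, y⁆) (J A) = 0 := by rw [hherm, hsymm]; exact hbrA _ _
      have t2 : B (J ⁅x, J y⁆) (J A) = 0 := by rw [hherm, hsymm]; exact hbrA _ _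
      simp only [map_add, LinearMap.add_apply, t1, t2, add_zero]
    have e1 : B ⁅A, J y⁆ (J (J x)) = -B ⁅A, J y⁆ x := by rw [hJ2]; simp
    have e2 : B ⁅A, J x⁆ (J (J y)) = -B ⁅A, J x⁆ y := by rw [hJ2]; simp
    have e3 : B (J (J x)) (J y) = B (J x) y := by
      rw [hJ2]
      simp only [map_neg, LinearMap.neg_apply]
      have := hJskew x y
      linarith
    rw [e0, e1, e2, e3, hAJ x, hAJ y] at h
    have e4 : B (J A) (J y) = B A y := hherm A y
    have e5 : B (J A) (J x) = B A x := hherm A x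
    rw [e4, e5] at h
    linear_combination h
  -- ad_A commutes with J (via positive-definiteness)
  have hL2 : ∀ x y : g, B ⁅A, J y⁆ x = B ⁅A, J x⁆ y := by
    intro x y
    have h1 := hI x y
    have h2 := hIII x y
    have h3 := hvaisman y (J x)
    have h4 := hvaisman x (J y)
    have h5 := hsymm y ⁅A, J x⁆
    have h6 := hsymm x ⁅A, J y⁆
    linarith [h2.trans h1.symm]
  have hzero : ∀ z : g, (∀ y, B z y = 0) → z = 0 := by
    intro z h
    by_contra hz
    exact (hpos z hz).ne' (h z)
  have hcomm : ∀ x : g, ⁅A, J x⁆ = J ⁅A, x⁆ := by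
    intro x
    have key : ∀ y, B (⁅A, J x⁆ - J ⁅A, x⁆) y = 0 := by
      intro y
      have e1 : B (J ⁅A, x⁆) y = B ⁅A, J x⁆ y := by
        rw [hJskew]
        have h4 := hvaisman x (J y)
        have h6 := hsymm x ⁅A, J y⁆
        have := hL2 x y
        linarith
      simp only [map_sub, LinearMap.sub_apply, e1, sub_self]
    have := hzero _ key
    exact sub_eq_zero.mp this
  -- goal 2 : J commutes with ad_{JA}
  have hJcomm : ∀ x : g, J ⁅J A, x⁆ = ⁅J A, J x⁆ := by
    intro x
    have h := hint A x
    rw [map_add, hcomm x, hJ2] at h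
    have : ⁅J A, J x⁆ - J ⁅J A, x⁆ = 0 := by rw [← h]; abel
    exact (sub_eq_zero.mp this).symm
  refine ⟨?_, hJcomm⟩
  -- goal 1 : skew-symmetry
  intro x y
  have h := hII x (J y)
  rw [hJ2] at h
  have e1 : B ⁅J A, x⁆ (-y) = -B ⁅J A, x⁆ y := by simp
  have e2 : B ⁅J A, J y⁆ (J x) = B x ⁅J A, y⁆ := by
    rw [← hJcomm y, hherm, hsymm]
  rw [e1, e2] at h
  linarith
end

section
/- Consider the Lie algebra g = ℝA ⋉_D h_{2n-1}, where h_{2n-1} is the (2n-1)-dimensional Heisenberg Lie algebra with basis {B, e₁, …, e_{2n-2}}, nonzero brackets [e_{2i-1}, e_{2i}] = B, and D = ad_A acts by D(B) = 0, D(e_{2i-1}) = a_i e_{2i}, D(e_{2i}) = -a_i e_{2i-1} for real constants a_i. With the inner product making {A, B, e₁, …, e_{2n-2}} orthonormal and complex structure JA = B, Je_{2i-1} = e_{2i}, this is a Vaisman Lie algebra: dω = θ∧ω with θ = α (the dual of A), and ad_A is skew-symmetric. -/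
set_option maxHeartbeats 1000000


/-- The Lie algebra `g = ℝA ⋉_D h_{2n-1}` — where `h_{2n-1}` is the Heisenberg
Lie algebra with orthonormal basis `{B, e₁, …, e_{2n-2}}`, nonzero brackets
`[e_{2i-1}, e_{2i}] = B`, and `D = ad_A` acts by `D(B) = 0`,
`D(e_{2i-1}) = aᵢ e_{2i}`, `D(e_{2i}) = -aᵢ e_{2i-1}` — with the inner product
making `{A, B, e₁, …, e_{2n-2}}` orthonormal and complex structure `JA = B`,
`Je_{2i-1} = e_{2i}`, is a Vaisman Lie algebra: `J` is integrable,
`dω = θ ∧ ω` with closed Lee form `θ = α` (the dual of `A`), and `ad_A` is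
skew-symmetric. Here `f i = e_{2i-1}` and `w i = e_{2i}` for `i = 1, …, n-1`. -/
theorem heisenberg_extension_vaisman {g : Type*} [LieRing g] [LieAlgebra ℝ g]
    (n : ℕ) (hn : 1 ≤ n)
    (ip : g →ₗ[ℝ] g →ₗ[ℝ] ℝ)
    (hsymm : ∀ x y, ip x y = ip y x)
    (hpos : ∀ x : g, x ≠ 0 → 0 < ip x x)
    (A B : g) (f w : Fin (n - 1) → g) (a : Fin (n - 1) → ℝ)
    (hspan : Submodule.span ℝ ({A, B} ∪ Set.range f ∪ Set.range w) = ⊤)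
    -- orthonormality
    (o1 : ip A A = 1) (o2 : ip B B = 1) (o3 : ip A B = 0)
    (o4 : ∀ i, ip A (f i) = 0) (o5 : ∀ i, ip A (w i) = 0)
    (o6 : ∀ i, ip B (f i) = 0) (o7 : ∀ i, ip B (w i) = 0)
    (o8 : ∀ i j, ip (f i) (f j) = if i = j then 1 else 0)
    (o9 : ∀ i j, ip (w i) (w j) = if i = j then 1 else 0)
    (o10 : ∀ i j, ip (f i) (w j) = 0)
    -- Lie brackets
    (b1 : ∀ i j, ⁅f i, w j⁆ = if i = j then B else 0)
    (b2 : ∀ i j, ⁅f i, f j⁆ = 0) (b3 : ∀ i j, ⁅w i, w j⁆ = 0)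
    (b4 : ∀ i, ⁅A, f i⁆ = a i • w i) (b5 : ∀ i, ⁅A, w i⁆ = -(a i) • f i)
    (b6 : ⁅A, B⁆ = 0) (b7 : ∀ i, ⁅B, f i⁆ = 0) (b8 : ∀ i, ⁅B, w i⁆ = 0)
    -- complex structure
    (J : g →ₗ[ℝ] g)
    (j1 : J A = B) (j2 : J B = -A)
    (j3 : ∀ i, J (f i) = w i) (j4 : ∀ i, J (w i) = -(f i))
    -- Lee form θ = α
    (θ : g →ₗ[ℝ] ℝ)
    (t1 : θ A = 1) (t2 : θ B = 0) (t3 : ∀ i, θ (f i) = 0)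
    (t4 : ∀ i, θ (w i) = 0) :
    (∀ u v : g, ⁅J u, J v⁆ - ⁅u, v⁆ - J (⁅J u, v⁆ + ⁅u, J v⁆) = 0) ∧
    (∀ x y : g, θ ⁅x, y⁆ = 0) ∧
    (∀ u v z : g,
      -(ip (J ⁅u, v⁆) z) - ip (J ⁅v, z⁆) u - ip (J ⁅z, u⁆) v
        = θ u * ip (J v) z + θ v * ip (J z) u + θ z * ip (J u) v) ∧
    (∀ x y : g, ip ⁅A, x⁆ y = -ip x ⁅A, y⁆) := by
  set S : Set g := ({A, B} ∪ Set.range f ∪ Set.range w) with hSdef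
  have hmem : ∀ x : g, x ∈ Submodule.span ℝ S := fun x => hspan ▸ Submodule.mem_top
  have ind : ∀ p : g → Prop, (∀ x ∈ S, p x) → p 0 →
      (∀ x y, p x → p y → p (x + y)) → (∀ (r : ℝ) x, p x → p (r • x)) → ∀ x, p x := by
    intro p hm h0 ha hs x
    exact Submodule.span_induction hm h0 (fun x y _ _ => ha x y) (fun r x _ => hs r x) (hmem x)
  have hcases : ∀ x ∈ S, x = A ∨ x = B ∨ (∃ i, x = f i) ∨ (∃ i, x = w i) := by
    intro x hx
    simp only [hSdef, Set.mem_union, Set.mem_insert_iff, Set.mem_singleton_iff,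
      Set.mem_range] at hx
    rcases hx with ((h | h) | ⟨i, h⟩) | ⟨i, h⟩
    · exact Or.inl h
    · exact Or.inr (Or.inl h)
    · exact Or.inr (Or.inr (Or.inl ⟨i, h.symm⟩))
    · exact Or.inr (Or.inr (Or.inr ⟨i, h.symm⟩))
  -- derived brackets and inner products
  have b1' : ∀ i j, ⁅w i, f j⁆ = -(if j = i then B else 0) := fun i j => by
    rw [← lie_skew, b1]
  have b4' : ∀ i, ⁅f i, A⁆ = -(a i • w i) := fun i => by rw [← lie_skew, b4]
  have b5' : ∀ i, ⁅w i, A⁆ = a i • f i := fun i => by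
    rw [← lie_skew, b5, neg_smul, neg_neg]
  have b6' : ⁅B, A⁆ = 0 := by rw [← lie_skew, b6, neg_zero]
  have b7' : ∀ i, ⁅f i, B⁆ = 0 := fun i => by rw [← lie_skew, b7, neg_zero]
  have b8' : ∀ i, ⁅w i, B⁆ = 0 := fun i => by rw [← lie_skew, b8, neg_zero]
  have o3' : ip B A = 0 := by rw [hsymm]; exact o3
  have o4' : ∀ i, ip (f i) A = 0 := fun i => by rw [hsymm]; exact o4 i
  have o5' : ∀ i, ip (w i) A = 0 := fun i => by rw [hsymm]; exact o5 i
  have o6' : ∀ i, ip (f i) B = 0 := fun i => by rw [hsymm]; exact o6 i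
  have o7' : ∀ i, ip (w i) B = 0 := fun i => by rw [hsymm]; exact o7 i
  have o10' : ∀ i j, ip (w i) (f j) = 0 := fun i j => by rw [hsymm]; exact o10 j i
  -- Part 1: integrability of J
  have part1 : ∀ u v : g, ⁅J u, J v⁆ - ⁅u, v⁆ - J (⁅J u, v⁆ + ⁅u, J v⁆) = 0 := by
    have base : ∀ u ∈ S, ∀ v ∈ S,
        ⁅J u, J v⁆ - ⁅u, v⁆ - J (⁅J u, v⁆ + ⁅u, J v⁆) = 0 := by
      intro u hu v hv
      rcases hcases u hu with h | h | ⟨i, h⟩ | ⟨i, h⟩ <;>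
        rcases hcases v hv with h' | h' | ⟨j, h'⟩ | ⟨j, h'⟩ <;> subst h <;> subst h'
      all_goals
        simp [b1, b1', b2, b3, b4, b4', b5, b5', b6, b6', b7, b7', b8, b8',
          j1, j2, j3, j4, lie_self, lie_neg, neg_lie, map_add, map_neg, map_smul,
          smul_neg, neg_smul]
      all_goals try
        (rcases eq_or_ne i j with hij | hij
         · subst hij; simp [b1, b1', b2, b3, b4, b4', b5, b5', b6, b6', b7, b7', b8, b8', j1, j2, j3, j4, lie_self, t1, t2, t3, t4, o1, o2, o3, o3', o4, o4', o5, o5', o6, o6', o7, o7', o8, o9, o10, o10', map_add, map_neg, map_smul, LinearMap.add_apply, LinearMap.neg_apply, LinearMap.smul_apply, smul_eq_mul]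
         · simp [b1, b1', b2, b3, b4, b4', b5, b5', b6, b6', b7, b7', b8, b8', j1, j2, j3, j4, lie_self, t1, t2, t3, t4, o1, o2, o3, o3', o4, o4', o5, o5', o6, o6', o7, o7', o8, o9, o10, o10', map_add, map_neg, map_smul, LinearMap.add_apply, LinearMap.neg_apply, LinearMap.smul_apply, smul_eq_mul, hij, Ne.symm hij])
      all_goals try
        (rcases eq_or_ne j k with hjk | hjk
         · subst hjk; simp [b1, b1', b2, b3, b4, b4', b5, b5', b6, b6', b7, b7', b8, b8', j1, j2, j3, j4, lie_self, t1, t2, t3, t4, o1, o2, o3, o3', o4, o4', o5, o5', o6, o6', o7, o7', o8, o9, o10, o10', map_add, map_neg, map_smul, LinearMap.add_apply, LinearMap.neg_apply, LinearMap.smul_apply, smul_eq_mul]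
         · simp [b1, b1', b2, b3, b4, b4', b5, b5', b6, b6', b7, b7', b8, b8', j1, j2, j3, j4, lie_self, t1, t2, t3, t4, o1, o2, o3, o3', o4, o4', o5, o5', o6, o6', o7, o7', o8, o9, o10, o10', map_add, map_neg, map_smul, LinearMap.add_apply, LinearMap.neg_apply, LinearMap.smul_apply, smul_eq_mul, hjk, Ne.symm hjk])
      all_goals try
        (rcases eq_or_ne i k with hik | hik
         · subst hik; simp [b1, b1', b2, b3, b4, b4', b5, b5', b6, b6', b7, b7', b8, b8', j1, j2, j3, j4, lie_self, t1, t2, t3, t4, o1, o2, o3, o3', o4, o4', o5, o5', o6, o6', o7, o7', o8, o9, o10, o10', map_add, map_neg, map_smul, LinearMap.add_apply, LinearMap.neg_apply, LinearMap.smul_apply, smul_eq_mul]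
         · simp [b1, b1', b2, b3, b4, b4', b5, b5', b6, b6', b7, b7', b8, b8', j1, j2, j3, j4, lie_self, t1, t2, t3, t4, o1, o2, o3, o3', o4, o4', o5, o5', o6, o6', o7, o7', o8, o9, o10, o10', map_add, map_neg, map_smul, LinearMap.add_apply, LinearMap.neg_apply, LinearMap.smul_apply, smul_eq_mul, hik, Ne.symm hik])
      all_goals try (split_ifs <;> simp [b1, b1', b2, b3, b4, b4', b5, b5', b6, b6', b7, b7', b8, b8', j1, j2, j3, j4, lie_self, t1, t2, t3, t4, o1, o2, o3, o3', o4, o4', o5, o5', o6, o6', o7, o7', o8, o9, o10, o10', map_add, map_neg, map_smul, LinearMap.add_apply, LinearMap.neg_apply, LinearMap.smul_apply, smul_eq_mul])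
      all_goals try abel
      all_goals try ring
    intro u v
    refine ind (fun u => ∀ v, ⁅J u, J v⁆ - ⁅u, v⁆ - J (⁅J u, v⁆ + ⁅u, J v⁆) = 0)
      ?_ ?_ ?_ ?_ u v
    · intro u hu
      refine ind _ (base u hu) ?_ ?_ ?_
      · simp
      · intro x y hx hy
        have e : ⁅J u, J (x + y)⁆ - ⁅u, x + y⁆ - J (⁅J u, x + y⁆ + ⁅u, J (x + y)⁆)
            = (⁅J u, J x⁆ - ⁅u, x⁆ - J (⁅J u, x⁆ + ⁅u, J x⁆))
              + (⁅J u, J y⁆ - ⁅u, y⁆ - J (⁅J u, y⁆ + ⁅u, J y⁆)) := by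
          simp only [map_add, lie_add, add_lie]; abel
        rw [e, hx, hy, add_zero]
      · intro r x hx
        have e : ⁅J u, J (r • x)⁆ - ⁅u, r • x⁆ - J (⁅J u, r • x⁆ + ⁅u, J (r • x)⁆)
            = r • (⁅J u, J x⁆ - ⁅u, x⁆ - J (⁅J u, x⁆ + ⁅u, J x⁆)) := by
          simp only [map_smul, map_add, lie_smul, smul_add, smul_sub]
        rw [e, hx, smul_zero]
    · intro v; simp
    · intro x y hx hy v
      have e : ⁅J (x + y), J v⁆ - ⁅x + y, v⁆ - J (⁅J (x + y), v⁆ + ⁅x + y, J v⁆)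
          = (⁅J x, J v⁆ - ⁅x, v⁆ - J (⁅J x, v⁆ + ⁅x, J v⁆))
            + (⁅J y, J v⁆ - ⁅y, v⁆ - J (⁅J y, v⁆ + ⁅y, J v⁆)) := by
        simp only [map_add, lie_add, add_lie]; abel
      rw [e, hx v, hy v, add_zero]
    · intro r x hx v
      have e : ⁅J (r • x), J v⁆ - ⁅r • x, v⁆ - J (⁅J (r • x), v⁆ + ⁅r • x, J v⁆)
          = r • (⁅J x, J v⁆ - ⁅x, v⁆ - J (⁅J x, v⁆ + ⁅x, J v⁆)) := by
        simp only [map_smul, map_add, smul_lie, smul_add, smul_sub]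
      rw [e, hx v, smul_zero]
  -- Part 2: θ vanishes on the commutator ideal (dθ = 0)
  have part2 : ∀ x y : g, θ ⁅x, y⁆ = 0 := by
    have base : ∀ x ∈ S, ∀ y ∈ S, θ ⁅x, y⁆ = 0 := by
      intro x hx y hy
      rcases hcases x hx with h | h | ⟨i, h⟩ | ⟨i, h⟩ <;>
        rcases hcases y hy with h' | h' | ⟨j, h'⟩ | ⟨j, h'⟩ <;> subst h <;> subst h'
      all_goals
        simp [b1, b1', b2, b3, b4, b4', b5, b5', b6, b6', b7, b7', b8, b8',
          lie_self, t1, t2, t3, t4, map_smul, map_neg, smul_eq_mul]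
      all_goals try
        (rcases eq_or_ne i j with hij | hij
         · simp [hij, t2]
         · simp [hij, Ne.symm hij])
    intro x y
    refine ind (fun x => ∀ y, θ ⁅x, y⁆ = 0) ?_ ?_ ?_ ?_ x y
    · intro x hx
      refine ind _ (base x hx) ?_ ?_ ?_
      · simp
      · intro u v hu hv; simp only [lie_add, map_add, hu, hv, add_zero]
      · intro r u hu; simp only [lie_smul, map_smul, hu, smul_zero]
    · intro y; simp
    · intro u v hu hv y; simp only [add_lie, map_add, hu y, hv y, add_zero]
    · intro r u hu y; simp only [smul_lie, map_smul, hu y, smul_zero]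
  -- Part 3: dω = θ ∧ ω
  have part3 : ∀ u v z : g,
      -(ip (J ⁅u, v⁆) z) - ip (J ⁅v, z⁆) u - ip (J ⁅z, u⁆) v
        = θ u * ip (J v) z + θ v * ip (J z) u + θ z * ip (J u) v := by
    have base : ∀ u ∈ S, ∀ v ∈ S, ∀ z ∈ S,
        -(ip (J ⁅u, v⁆) z) - ip (J ⁅v, z⁆) u - ip (J ⁅z, u⁆) v
          = θ u * ip (J v) z + θ v * ip (J z) u + θ z * ip (J u) v := by
      intro u hu v hv z hz
      rcases hcases u hu with h | h | ⟨i, h⟩ | ⟨i, h⟩ <;>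
        rcases hcases v hv with h' | h' | ⟨j, h'⟩ | ⟨j, h'⟩ <;>
        rcases hcases z hz with h'' | h'' | ⟨k, h''⟩ | ⟨k, h''⟩ <;>
        subst h <;> subst h' <;> subst h''
      all_goals
        simp [b1, b1', b2, b3, b4, b4', b5, b5', b6, b6', b7, b7', b8, b8',
          j1, j2, j3, j4, lie_self, t1, t2, t3, t4,
          o1, o2, o3, o3', o4, o4', o5, o5', o6, o6', o7, o7', o8, o9, o10, o10',
          map_add, map_neg, map_smul, LinearMap.add_apply, LinearMap.neg_apply,
          LinearMap.smul_apply, smul_eq_mul]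
      all_goals try
        (rcases eq_or_ne i j with hij | hij
         · subst hij; simp [b1, b1', b2, b3, b4, b4', b5, b5', b6, b6', b7, b7', b8, b8', j1, j2, j3, j4, lie_self, t1, t2, t3, t4, o1, o2, o3, o3', o4, o4', o5, o5', o6, o6', o7, o7', o8, o9, o10, o10', map_add, map_neg, map_smul, LinearMap.add_apply, LinearMap.neg_apply, LinearMap.smul_apply, smul_eq_mul]
         · simp [b1, b1', b2, b3, b4, b4', b5, b5', b6, b6', b7, b7', b8, b8', j1, j2, j3, j4, lie_self, t1, t2, t3, t4, o1, o2, o3, o3', o4, o4', o5, o5', o6, o6', o7, o7', o8, o9, o10, o10', map_add, map_neg, map_smul, LinearMap.add_apply, LinearMap.neg_apply, LinearMap.smul_apply, smul_eq_mul, hij, Ne.symm hij])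
      all_goals try
        (rcases eq_or_ne j k with hjk | hjk
         · subst hjk; simp [b1, b1', b2, b3, b4, b4', b5, b5', b6, b6', b7, b7', b8, b8', j1, j2, j3, j4, lie_self, t1, t2, t3, t4, o1, o2, o3, o3', o4, o4', o5, o5', o6, o6', o7, o7', o8, o9, o10, o10', map_add, map_neg, map_smul, LinearMap.add_apply, LinearMap.neg_apply, LinearMap.smul_apply, smul_eq_mul]
         · simp [b1, b1', b2, b3, b4, b4', b5, b5', b6, b6', b7, b7', b8, b8', j1, j2, j3, j4, lie_self, t1, t2, t3, t4, o1, o2, o3, o3', o4, o4', o5, o5', o6, o6', o7, o7', o8, o9, o10, o10', map_add, map_neg, map_smul, LinearMap.add_apply, LinearMap.neg_apply, LinearMap.smul_apply, smul_eq_mul, hjk, Ne.symm hjk])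
      all_goals try
        (rcases eq_or_ne i k with hik | hik
         · subst hik; simp [b1, b1', b2, b3, b4, b4', b5, b5', b6, b6', b7, b7', b8, b8', j1, j2, j3, j4, lie_self, t1, t2, t3, t4, o1, o2, o3, o3', o4, o4', o5, o5', o6, o6', o7, o7', o8, o9, o10, o10', map_add, map_neg, map_smul, LinearMap.add_apply, LinearMap.neg_apply, LinearMap.smul_apply, smul_eq_mul]
         · simp [b1, b1', b2, b3, b4, b4', b5, b5', b6, b6', b7, b7', b8, b8', j1, j2, j3, j4, lie_self, t1, t2, t3, t4, o1, o2, o3, o3', o4, o4', o5, o5', o6, o6', o7, o7', o8, o9, o10, o10', map_add, map_neg, map_smul, LinearMap.add_apply, LinearMap.neg_apply, LinearMap.smul_apply, smul_eq_mul, hik, Ne.symm hik])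
      all_goals try (split_ifs <;> simp [b1, b1', b2, b3, b4, b4', b5, b5', b6, b6', b7, b7', b8, b8', j1, j2, j3, j4, lie_self, t1, t2, t3, t4, o1, o2, o3, o3', o4, o4', o5, o5', o6, o6', o7, o7', o8, o9, o10, o10', map_add, map_neg, map_smul, LinearMap.add_apply, LinearMap.neg_apply, LinearMap.smul_apply, smul_eq_mul])
      all_goals try abel
      all_goals try ring
    intro u v z
    refine ind (fun u => ∀ v z,
        -(ip (J ⁅u, v⁆) z) - ip (J ⁅v, z⁆) u - ip (J ⁅z, u⁆) v
          = θ u * ip (J v) z + θ v * ip (J z) u + θ z * ip (J u) v) ?_ ?_ ?_ ?_ u v z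
    · intro u hu
      -- induct on v, then z
      intro v
      refine ind (fun v => ∀ z,
          -(ip (J ⁅u, v⁆) z) - ip (J ⁅v, z⁆) u - ip (J ⁅z, u⁆) v
            = θ u * ip (J v) z + θ v * ip (J z) u + θ z * ip (J u) v) ?_ ?_ ?_ ?_ v
      · intro v hv
        refine ind _ (base u hu v hv) ?_ ?_ ?_
        · simp
        · intro x y hx hy
          simp only [lie_add, add_lie, map_add, LinearMap.add_apply] at *
          linear_combination hx + hy
        · intro r x hx
          simp only [lie_smul, smul_lie, map_smul, LinearMap.smul_apply,
            smul_eq_mul] at *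
          linear_combination r * hx
      · intro z; simp
      · intro x y hx hy z
        simp only [lie_add, add_lie, map_add, LinearMap.add_apply] at *
        linear_combination hx z + hy z
      · intro r x hx z
        simp only [lie_smul, smul_lie, map_smul, LinearMap.smul_apply,
          smul_eq_mul] at *
        linear_combination r * hx z
    · intro v z; simp
    · intro x y hx hy v z
      simp only [lie_add, add_lie, map_add, LinearMap.add_apply] at *
      linear_combination hx v z + hy v z
    · intro r x hx v z
      simp only [lie_smul, smul_lie, map_smul, LinearMap.smul_apply, smul_eq_mul] at *
      linear_combination r * hx v z
  -- Part 4: ad_A is skew-symmetric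
  have part4 : ∀ x y : g, ip ⁅A, x⁆ y = -ip x ⁅A, y⁆ := by
    have base : ∀ x ∈ S, ∀ y ∈ S, ip ⁅A, x⁆ y = -ip x ⁅A, y⁆ := by
      intro x hx y hy
      rcases hcases x hx with h | h | ⟨i, h⟩ | ⟨i, h⟩ <;>
        rcases hcases y hy with h' | h' | ⟨j, h'⟩ | ⟨j, h'⟩ <;> subst h <;> subst h' <;>
        skip
      all_goals
        simp [b4, b5, b6, lie_self, o1, o2, o3, o3', o4, o4', o5, o5', o6, o6',
          o7, o7', o8, o9, o10, o10', map_smul, map_neg, LinearMap.smul_apply,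
          LinearMap.neg_apply, smul_eq_mul, neg_smul]
      all_goals try
        (rcases eq_or_ne i j with hij | hij
         · subst hij; simp [b1, b1', b2, b3, b4, b4', b5, b5', b6, b6', b7, b7', b8, b8', j1, j2, j3, j4, lie_self, t1, t2, t3, t4, o1, o2, o3, o3', o4, o4', o5, o5', o6, o6', o7, o7', o8, o9, o10, o10', map_add, map_neg, map_smul, LinearMap.add_apply, LinearMap.neg_apply, LinearMap.smul_apply, smul_eq_mul]
         · simp [b1, b1', b2, b3, b4, b4', b5, b5', b6, b6', b7, b7', b8, b8', j1, j2, j3, j4, lie_self, t1, t2, t3, t4, o1, o2, o3, o3', o4, o4', o5, o5', o6, o6', o7, o7', o8, o9, o10, o10', map_add, map_neg, map_smul, LinearMap.add_apply, LinearMap.neg_apply, LinearMap.smul_apply, smul_eq_mul, hij, Ne.symm hij])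
      all_goals try
        (rcases eq_or_ne j k with hjk | hjk
         · subst hjk; simp [b1, b1', b2, b3, b4, b4', b5, b5', b6, b6', b7, b7', b8, b8', j1, j2, j3, j4, lie_self, t1, t2, t3, t4, o1, o2, o3, o3', o4, o4', o5, o5', o6, o6', o7, o7', o8, o9, o10, o10', map_add, map_neg, map_smul, LinearMap.add_apply, LinearMap.neg_apply, LinearMap.smul_apply, smul_eq_mul]
         · simp [b1, b1', b2, b3, b4, b4', b5, b5', b6, b6', b7, b7', b8, b8', j1, j2, j3, j4, lie_self, t1, t2, t3, t4, o1, o2, o3, o3', o4, o4', o5, o5', o6, o6', o7, o7', o8, o9, o10, o10', map_add, map_neg, map_smul, LinearMap.add_apply, LinearMap.neg_apply, LinearMap.smul_apply, smul_eq_mul, hjk, Ne.symm hjk])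
      all_goals try
        (rcases eq_or_ne i k with hik | hik
         · subst hik; simp [b1, b1', b2, b3, b4, b4', b5, b5', b6, b6', b7, b7', b8, b8', j1, j2, j3, j4, lie_self, t1, t2, t3, t4, o1, o2, o3, o3', o4, o4', o5, o5', o6, o6', o7, o7', o8, o9, o10, o10', map_add, map_neg, map_smul, LinearMap.add_apply, LinearMap.neg_apply, LinearMap.smul_apply, smul_eq_mul]
         · simp [b1, b1', b2, b3, b4, b4', b5, b5', b6, b6', b7, b7', b8, b8', j1, j2, j3, j4, lie_self, t1, t2, t3, t4, o1, o2, o3, o3', o4, o4', o5, o5', o6, o6', o7, o7', o8, o9, o10, o10', map_add, map_neg, map_smul, LinearMap.add_apply, LinearMap.neg_apply, LinearMap.smul_apply, smul_eq_mul, hik, Ne.symm hik])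
      all_goals try (split_ifs <;> simp [b1, b1', b2, b3, b4, b4', b5, b5', b6, b6', b7, b7', b8, b8', j1, j2, j3, j4, lie_self, t1, t2, t3, t4, o1, o2, o3, o3', o4, o4', o5, o5', o6, o6', o7, o7', o8, o9, o10, o10', map_add, map_neg, map_smul, LinearMap.add_apply, LinearMap.neg_apply, LinearMap.smul_apply, smul_eq_mul])
      all_goals try abel
      all_goals try ring
    intro x y
    refine ind (fun x => ∀ y, ip ⁅A, x⁆ y = -ip x ⁅A, y⁆) ?_ ?_ ?_ ?_ x y
    · intro x hx
      refine ind _ (base x hx) ?_ ?_ ?_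
      · simp
      · intro u v hu hv
        simp only [lie_add, map_add, LinearMap.add_apply] at *
        linear_combination hu + hv
      · intro r u hu
        simp only [lie_smul, map_smul, LinearMap.smul_apply, smul_eq_mul] at *
        linear_combination r * hu
    · intro y; simp
    · intro u v hu hv y
      simp only [lie_add, map_add, LinearMap.add_apply] at *
      linear_combination hu y + hv y
    · intro r u hu y
      simp only [lie_smul, map_smul, LinearMap.smul_apply, smul_eq_mul] at *
      linear_combination r * hu y
  exact ⟨part1, part2, part3, part4⟩
end
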